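/- arXiv:1801.08380 — 3 statements merged into one kernel-verified Lean document; each statement's English description precedes it below -/
import Mathlib

section
/- Let K be a connected finite abstract simplicial complex with n simplices and distinguished vertex p, let c > 0 be an integer, and let K̂_c be the wedge of m = n^{c−1} disjoint copies of K obtained by identifying the copies of the basepoint p to a single vertex. If K is not collapsible, then every discrete gradient vector field on K̂_c has more than n^{c−1} critical simplices. -/
namespace MorseApprox

variable {α : Type*}

/-- A (finite abstract) simplicial complex: a collection of nonempty finite simplices
closed under taking nonempty subsets. -/
def IsComplex (K : Set (Finset α)) : Prop :=
  (∀ σ ∈ K, σ.Nonempty) ∧ ∀ σ ∈ K, ∀ τ : Finset α, τ ⊆ σ → τ.Nonempty → τ ∈ K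

def IsSubcomplex (L K : Set (Finset α)) : Prop :=
  L ⊆ K ∧ IsComplex L

def IsMaximalFace (K : Set (Finset α)) (τ : Finset α) : Prop :=
  τ ∈ K ∧ ∀ ρ ∈ K, τ ⊆ ρ → ρ = τ

/-- A free face: a non-maximal simplex contained in a unique maximal simplex. -/
def IsFreeFace (K : Set (Finset α)) (σ : Finset α) : Prop :=
  σ ∈ K ∧ ¬ IsMaximalFace K σ ∧ ∃! τ : Finset α, IsMaximalFace K τ ∧ σ ⊆ τ

/-- An elementary collapse removes a free face `σ` together with its unique maximal
coface `τ`, provided `dim τ = dim σ + 1`. -/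
def ElemCollapse (K K' : Set (Finset α)) : Prop :=
  ∃ σ τ : Finset α, IsFreeFace K σ ∧ IsMaximalFace K τ ∧ σ ⊆ τ ∧
    τ.card = σ.card + 1 ∧ K' = K \ {σ, τ}

/-- `K` collapses to `L` via a finite sequence of elementary collapses. -/
def Collapses (K L : Set (Finset α)) : Prop :=
  Relation.ReflTransGen ElemCollapse K L

/-- `K` is collapsible if it collapses to a single vertex. -/
def Collapsible (K : Set (Finset α)) : Prop :=
  ∃ p : α, Collapses K ({({p} : Finset α)} : Set (Finset α))

/-- `K` is connected: its 1-skeleton is connected as a graph. -/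
def ComplexConnected [DecidableEq α] (K : Set (Finset α)) : Prop :=
  ∀ x y : α, ({x} : Finset α) ∈ K → ({y} : Finset α) ∈ K →
    Relation.ReflTransGen (fun a b : α => ({a, b} : Finset α) ∈ K ∧ a ≠ b) x y

/-- `σ` is a facet of `τ`. -/
def IsFacet (σ τ : Finset α) : Prop :=
  σ ⊆ τ ∧ τ.card = σ.card + 1

/-- The step relation of the Hasse diagram of `K` modified by the matching `V`:
an edge `τ → σ'` for every facet `σ'` of `τ` with `(σ', τ) ∉ V`, and an
edge `σ → τ` for every `(σ, τ) ∈ V`. -/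
def VStep (K : Set (Finset α)) (V : Set (Finset α × Finset α)) :
    Finset α → Finset α → Prop := fun x y =>
  (x ∈ K ∧ y ∈ K ∧ IsFacet y x ∧ (y, x) ∉ V) ∨ (x, y) ∈ V

/-- A discrete gradient vector field (Morse matching) on `K`. -/
def IsDGVF (K : Set (Finset α)) (V : Set (Finset α × Finset α)) : Prop :=
  (∀ p ∈ V, p.1 ∈ K ∧ p.2 ∈ K ∧ IsFacet p.1 p.2) ∧
  (∀ p ∈ V, ∀ q ∈ V,
    (p.1 = q.1 ∨ p.1 = q.2 ∨ p.2 = q.1 ∨ p.2 = q.2) → p = q) ∧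
  (∀ σ : Finset α, ¬ Relation.TransGen (VStep K V) σ σ)

/-- A critical simplex of a gradient vector field. -/
def IsCritical (K : Set (Finset α)) (V : Set (Finset α × Finset α))
    (σ : Finset α) : Prop :=
  σ ∈ K ∧ ∀ p ∈ V, σ ≠ p.1 ∧ σ ≠ p.2

noncomputable def criticalCount (K : Set (Finset α))
    (V : Set (Finset α × Finset α)) : ℕ :=
  {σ : Finset α | IsCritical K V σ}.ncard

noncomputable def regularCount (V : Set (Finset α × Finset α)) : ℕ :=
  {σ : Finset α | ∃ p ∈ V, σ = p.1 ∨ σ = p.2}.ncard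

def twoSimplices (K : Set (Finset α)) : Set (Finset α) :=
  {σ | σ ∈ K ∧ σ.card = 3}

/-- `L` is an erasable subcomplex of `K`. -/
def ErasableSubcomplex (K L : Set (Finset α)) : Prop :=
  ∃ M : Set (Finset α), IsSubcomplex M K ∧ Collapses K M ∧
    K \ M ⊆ L ∧ twoSimplices K \ M = twoSimplices L

/-- A 2-complex is erasable if it collapses to a complex of dimension at most 1. -/
def Erasable (K : Set (Finset α)) : Prop :=
  ∃ L : Set (Finset α), Collapses K L ∧ ∀ σ ∈ L, σ.card ≤ 2

/-- A collapse of `K` onto `M` induced by the gradient `V`: `K ∖ M` is a union of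
pairs of `V`. -/
def InducedCollapse (K M : Set (Finset α)) (V : Set (Finset α × Finset α)) : Prop :=
  IsSubcomplex M K ∧
    ∀ ρ ∈ K \ M, ∃ p ∈ V, (ρ = p.1 ∨ ρ = p.2) ∧ p.1 ∈ K \ M ∧ p.2 ∈ K \ M

/-- `σ` is eventually free in `K`. -/
def EventuallyFree (K : Set (Finset α)) (σ : Finset α) : Prop :=
  ∃ L : Set (Finset α), Collapses K L ∧ IsFreeFace L σ

/-- `σ` is eventually free in `K` through the gradient `V`. -/
def EventuallyFreeThrough (K : Set (Finset α)) (V : Set (Finset α × Finset α))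
    (σ : Finset α) : Prop :=
  ∃ L : Set (Finset α), InducedCollapse K L V ∧ Collapses K L ∧ IsFreeFace L σ

/-- `L` is erasable in `K` through the gradient `V`. -/
def ErasableThrough (K L : Set (Finset α)) (V : Set (Finset α × Finset α)) : Prop :=
  ∃ M : Set (Finset α), InducedCollapse K M V ∧ Collapses K M ∧
    K \ M ⊆ L ∧ twoSimplices K \ M = twoSimplices L

/-- A discrete Morse function on `K`: monotone, and any two distinct simplices with
the same value form a facet pair (hence every level set is a singleton or such a pair). -/
def IsDiscreteMorse (K : Set (Finset α)) (f : Finset α → ℝ) : Prop :=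
  (∀ σ ∈ K, ∀ τ ∈ K, σ ⊆ τ → f σ ≤ f τ) ∧
  (∀ σ ∈ K, ∀ τ ∈ K, σ ≠ τ → f σ = f τ → IsFacet σ τ ∨ IsFacet τ σ)

/-- `er K`: the minimum number of 2-simplices whose removal makes `K` erasable. -/
noncomputable def er (K : Set (Finset α)) : ℕ :=
  sInf {n | ∃ C : Set (Finset α), C ⊆ twoSimplices K ∧ Erasable (K \ C) ∧ n = C.ncard}

/-- The maximum number of regular (matched) simplices over all gradient vector
fields on `K`. -/
noncomputable def optMaxMM (K : Set (Finset α)) : ℕ :=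
  sSup {n | ∃ V : Set (Finset α × Finset α), IsDGVF K V ∧ n = regularCount V}

/-- The wedge of `m` disjoint copies of the pointed complex `(K, p)`, obtained by
identifying the copies of the basepoint `p` to the single vertex `none`. -/
def wedge [DecidableEq α] (K : Set (Finset α)) (p : α) (m : ℕ) :
    Set (Finset (Option ({x : α // x ≠ p} × Fin m))) :=
  {ρ | ∃ i : Fin m, ∃ σ ∈ K, ρ = σ.image fun x =>
    if h : x = p then (none : Option ({x : α // x ≠ p} × Fin m))
    else some (⟨x, h⟩, i)}

/-- If every vertex of `K` is matched, `VStep` has a cycle. -/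
lemma cycle_of_all_matched {K : Set (Finset α)} {V : Set (Finset α × Finset α)}
    (hfin : K.Finite) (hK : IsComplex K)
    (hV1 : ∀ p ∈ V, p.1 ∈ K ∧ p.2 ∈ K ∧ IsFacet p.1 p.2)
    (hV2 : ∀ p ∈ V, ∀ q ∈ V,
      (p.1 = q.1 ∨ p.1 = q.2 ∨ p.2 = q.1 ∨ p.2 = q.2) → p = q)
    {v0 : α} (hv0 : ({v0} : Finset α) ∈ K)
    (hm : ∀ v : α, ({v} : Finset α) ∈ K → ∃ q ∈ V, ({v} : Finset α) = q.1 ∨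
      ({v} : Finset α) = q.2) :
    ∃ σ : Finset α, Relation.TransGen (VStep K V) σ σ := by
  classical
  set T : Set α := {v | ({v} : Finset α) ∈ K} with hT
  have hTfin : T.Finite := by
    have h1 : ((fun v : α => ({v} : Finset α)) '' T).Finite :=
      hfin.subset (by rintro _ ⟨v, hv, rfl⟩; exact hv)
    exact h1.of_finite_image (fun a _ b _ h => Finset.singleton_injective h)
  have : Finite T := hTfin.to_subtype
  -- every vertex is matched upward to an edge
  have key : ∀ v : T, ∃ w : T, (w : α) ≠ (v : α) ∧
      (({(v : α)} : Finset α), ({(v : α), (w : α)} : Finset α)) ∈ V := by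
    rintro ⟨v, hv⟩
    obtain ⟨q, hq, hcase⟩ := hm v hv
    rcases hcase with h1 | h2
    · -- q.1 = {v}
      obtain ⟨hq1, hq2, hsub, hcard⟩ := hV1 q hq
      have hvq2 : v ∈ q.2 := by
        rw [← h1] at hsub; exact hsub (Finset.mem_singleton_self v)
      have hcard2 : q.2.card = 2 := by rw [hcard, ← h1]; simp
      have : (q.2.erase v).card = 1 := by
        rw [Finset.card_erase_of_mem hvq2, hcard2]
      obtain ⟨w, hw⟩ := Finset.card_eq_one.mp this
      have hwv : w ≠ v := by
        have : w ∈ q.2.erase v := hw ▸ Finset.mem_singleton_self w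
        exact Finset.ne_of_mem_erase this
      have hq2eq : q.2 = {v, w} := by
        rw [← Finset.insert_erase hvq2, hw]
      have hwK : ({w} : Finset α) ∈ K := by
        refine hK.2 q.2 hq2 {w} ?_ ⟨w, Finset.mem_singleton_self w⟩
        intro x hx
        rw [Finset.mem_singleton] at hx
        subst hx
        rw [hq2eq]; simp
      refine ⟨⟨w, hwK⟩, hwv, ?_⟩
      have : q = (({v} : Finset α), ({v, w} : Finset α)) := by
        have := Prod.mk.eta (p := q)
        rw [← this, Prod.mk.injEq]
        exact ⟨h1.symm, hq2eq⟩
      rwa [← this]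
    · -- {v} = q.2 impossible
      obtain ⟨hq1, _, hsub, hcard⟩ := hV1 q hq
      exfalso
      have h0 : q.1.card = 0 := by
        have : q.2.card = 1 := by rw [← h2]; simp
        omega
      have h1 : 1 ≤ q.1.card := Finset.card_pos.mpr (hK.1 q.1 hq1)
      omega
  choose g hg1 hg2 using key
  -- one TransGen step from v to g v
  have step : ∀ v : T, Relation.TransGen (VStep K V)
      ({(v : α)} : Finset α) ({(g v : α)} : Finset α) := by
    intro v
    have hmem := hV1 _ (hg2 v)
    refine Relation.TransGen.head (Or.inr (hg2 v)) (Relation.TransGen.single (Or.inl ?_))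
    refine ⟨hmem.2.1, ?_, ?_, ?_⟩
    · exact hK.2 _ hmem.2.1 _ (by intro x hx; rw [Finset.mem_singleton] at hx; subst hx; simp)
        ⟨_, Finset.mem_singleton_self _⟩
    · constructor
      · intro x hx; rw [Finset.mem_singleton] at hx; subst hx; simp
      · simp [Finset.card_insert_of_notMem, (hg1 v).symm,
          Finset.card_pair fun h => (hg1 v) h.symm]
    · intro hmemV
      have := hV2 _ hmemV _ (hg2 v) (by right; right; right; rfl)
      have : ({(g v : α)} : Finset α) = {(v : α)} := congrArg Prod.fst this
      exact hg1 v (Finset.singleton_injective this)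
  -- iterate and pigeonhole
  have hne : ∃ i j : ℕ, i < j ∧ g^[i] ⟨v0, hv0⟩ = g^[j] ⟨v0, hv0⟩ := by
    obtain ⟨i, j, hne, heq⟩ :=
      Finite.exists_ne_map_eq_of_infinite (fun n : ℕ => g^[n] (⟨v0, hv0⟩ : T))
    rcases Nat.lt_or_ge i j with h | h
    · exact ⟨i, j, h, heq⟩
    · exact ⟨j, i, lt_of_le_of_ne h (Ne.symm hne), heq.symm⟩
  obtain ⟨i, j, hij, heq⟩ := hne
  set a : T := g^[i] ⟨v0, hv0⟩ with ha
  have hk : ∀ k : ℕ, 0 < k → Relation.TransGen (VStep K V)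
      ({(a : α)} : Finset α) ({((g^[k] a : T) : α)} : Finset α) := by
    intro k hk
    induction k with
    | zero => omega
    | succ k ih =>
      rcases Nat.eq_zero_or_pos k with h0 | hpos
      · subst h0; simpa using step a
      · have := ih hpos
        have h2 : Relation.TransGen (VStep K V)
            ({((g^[k] a : T) : α)} : Finset α) ({((g^[k+1] a : T) : α)} : Finset α) := by
          rw [Function.iterate_succ_apply']
          exact step _
        exact this.trans h2
  have hcyc : g^[j - i] a = a := by
    rw [ha, ← Function.iterate_add_apply]
    rw [show j - i + i = j by omega]
    exact heq.symm
  refine ⟨({(a : α)} : Finset α), ?_⟩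
  have := hk (j - i) (by omega)
  rwa [hcyc] at this

lemma exists_vertex {K : Set (Finset α)} (hK : IsComplex K) (hne : K.Nonempty) :
    ∃ v : α, ({v} : Finset α) ∈ K := by
  obtain ⟨σ, hσ⟩ := hne
  obtain ⟨x, hx⟩ := hK.1 σ hσ
  exact ⟨x, hK.2 σ hσ {x} (Finset.singleton_subset_iff.mpr hx)
    ⟨x, Finset.mem_singleton_self x⟩⟩

lemma exists_critical_vertex {K : Set (Finset α)} {V : Set (Finset α × Finset α)}
    (hfin : K.Finite) (hK : IsComplex K) (hne : K.Nonempty) (hV : IsDGVF K V) :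
    ∃ v : α, ({v} : Finset α) ∈ K ∧ IsCritical K V ({v} : Finset α) := by
  by_contra hcon
  push_neg at hcon
  obtain ⟨v0, hv0⟩ := exists_vertex hK hne
  have hm : ∀ v : α, ({v} : Finset α) ∈ K → ∃ q ∈ V, ({v} : Finset α) = q.1 ∨
      ({v} : Finset α) = q.2 := by
    intro v hv
    have := hcon v hv
    unfold IsCritical at this
    push_neg at this
    obtain ⟨q, hq, hor⟩ := this hv
    by_cases h1 : ({v} : Finset α) = q.1
    · exact ⟨q, hq, Or.inl h1⟩
    · exact ⟨q, hq, Or.inr (hor h1)⟩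
  obtain ⟨σ, hσ⟩ := cycle_of_all_matched hfin hK hV.1 hV.2.1 hv0 hm
  exact hV.2.2 σ hσ

lemma critical_subset {K : Set (Finset α)} {V : Set (Finset α × Finset α)} :
    {σ : Finset α | IsCritical K V σ} ⊆ K := fun _ h => h.1

lemma collapsible_of_critical_le_one :
    ∀ (n : ℕ) (K : Set (Finset α)) (V : Set (Finset α × Finset α)),
      K.Finite → IsComplex K → K.Nonempty → IsDGVF K V →
      criticalCount K V ≤ 1 → K.ncard ≤ n → Collapsible K := by
  classical
  intro n
  induction n with
  | zero =>
    intro K V hfin hK hne hV hcc hcard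
    exfalso
    have := (Set.ncard_pos hfin).mpr hne
    omega
  | succ n ih =>
    intro K V hfin hK hne hV hcc hcard
    obtain ⟨v0, hv0K, hv0c⟩ := exists_critical_vertex hfin hK hne hV
    -- a simplex of maximal cardinality
    obtain ⟨τm, hτmK, hτmmax⟩ :=
      Set.Finite.exists_maximalFor (fun σ : Finset α => σ.card) K hfin hne
    have hmax : ∀ σ ∈ K, σ.card ≤ τm.card := by
      intro σ hσ
      by_contra h
      push_neg at h
      have : σ.card ≤ τm.card := hτmmax (j := σ) hσ (le_of_lt h)
      omega
    set N := τm.card with hNdef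
    by_cases hN : N ≤ 1
    · -- all simplices are vertices; V is empty; K is a single vertex
      have hVemp : ∀ q : Finset α × Finset α, q ∉ V := by
        intro q hq
        obtain ⟨h1, h2, hsub, hcard'⟩ := hV.1 q hq
        have := hmax q.2 h2
        have := Finset.card_pos.mpr (hK.1 q.1 h1)
        omega
      have hcrit : {σ : Finset α | IsCritical K V σ} = K := by
        apply Set.Subset.antisymm critical_subset
        intro σ hσ
        exact ⟨hσ, fun q hq => absurd hq (hVemp q)⟩
      rw [criticalCount, hcrit] at hcc
      have h1 : K.ncard = 1 := le_antisymm hcc ((Set.ncard_pos hfin).mpr hne)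
      obtain ⟨σ0, hσ0⟩ := Set.ncard_eq_one.mp h1
      have hσ0K : σ0 ∈ K := by rw [hσ0]; rfl
      have : σ0.card = 1 := by
        have := Finset.card_pos.mpr (hK.1 σ0 hσ0K)
        have := hmax σ0 hσ0K
        omega
      obtain ⟨x, hx⟩ := Finset.card_eq_one.mp this
      exact ⟨x, by rw [hσ0, hx]; exact Relation.ReflTransGen.refl⟩
    · push_neg at hN
      -- every top simplex is matched downward
      have hfinCrit : {σ : Finset α | IsCritical K V σ}.Finite :=
        hfin.subset critical_subset
      have hDm : ∀ τ : Finset α, τ ∈ K → τ.card = N → ∃ σ, (σ, τ) ∈ V := by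
        intro τ hτK hτN
        by_contra hno
        push_neg at hno
        have hτcrit : IsCritical K V τ := by
          refine ⟨hτK, fun q hq => ⟨?_, ?_⟩⟩
          · rintro rfl
            obtain ⟨h1, h2, hsub, hcard'⟩ := hV.1 q hq
            have := hmax q.2 h2
            omega
          · rintro rfl
            have hq' : q = (q.1, q.2) := rfl
            exact hno q.1 (hq' ▸ hq)
        have : 1 < {σ : Finset α | IsCritical K V σ}.ncard := by
          rw [Set.one_lt_ncard hfinCrit]
          refine ⟨τ, hτcrit, {v0}, hv0c, ?_⟩
          intro h
          rw [h] at hτN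
          simp at hτN
          omega
        have hcc2 : {σ : Finset α | IsCritical K V σ}.ncard ≤ 1 := hcc
        omega
      choose sfn hsfn using hDm
      -- the set of top simplices
      set D : Set (Finset α) := {τ | τ ∈ K ∧ τ.card = N} with hDdef
      have hDfin : D.Finite := hfin.subset (fun τ h => h.1)
      have : Finite ↥D := hDfin.to_subtype
      -- there is a top simplex whose matched facet has no other top coface
      have hsource : ∃ τ' : Finset α, ∃ (h1 : τ' ∈ K) (h2 : τ'.card = N),
          ∀ ρ ∈ K, ρ.card = N → sfn τ' h1 h2 ⊆ ρ → ρ = τ' := by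
        by_contra hno
        push_neg at hno
        have key : ∀ τ : ↥D, ∃ τ'' : ↥D, (τ'' : Finset α) ≠ (τ : Finset α) ∧
            Relation.TransGen (VStep K V) (τ'' : Finset α) (τ : Finset α) := by
          rintro ⟨τ, hτK, hτN⟩
          obtain ⟨ρ, hρK, hρN, hρsub, hρne⟩ := hno τ hτK hτN
          refine ⟨⟨ρ, hρK, hρN⟩, hρne, ?_⟩
          have hmemV := hsfn τ hτK hτN
          obtain ⟨hs1, hs2, hssub, hscard⟩ := hV.1 _ hmemV
          have hs1' : sfn τ hτK hτN ∈ K := hs1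
          have hscard' : τ.card = (sfn τ hτK hτN).card + 1 := hscard
          show Relation.TransGen (VStep K V) ρ τ
          refine Relation.TransGen.head (Or.inl ⟨hρK, hs1', ⟨hρsub, by omega⟩, ?_⟩)
            (Relation.TransGen.single (Or.inr hmemV))
          intro hin
          have := hV.2.1 _ hin _ hmemV (Or.inl rfl)
          have : ρ = τ := congrArg Prod.snd this
          exact hρne this
        choose g hg1 hg2 using key
        obtain ⟨τ0, hτ0⟩ : ∃ τ0 : ↥D, True := ⟨⟨τm, hτmK, rfl⟩, trivial⟩
        have hchain : ∀ k : ℕ, 0 < k → Relation.TransGen (VStep K V)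
            ((g^[k] τ0 : ↥D) : Finset α) ((τ0 : ↥D) : Finset α) := by
          intro k hk
          induction k with
          | zero => omega
          | succ k ihk =>
            rcases Nat.eq_zero_or_pos k with h0 | hpos
            · subst h0; simpa using hg2 τ0
            · have h2 : Relation.TransGen (VStep K V)
                  ((g^[k+1] τ0 : ↥D) : Finset α) ((g^[k] τ0 : ↥D) : Finset α) := by
                rw [Function.iterate_succ_apply']
                exact hg2 _
              exact h2.trans (ihk hpos)
        obtain ⟨i, j, hne', heq⟩ :=
          Finite.exists_ne_map_eq_of_infinite (fun n : ℕ => g^[n] τ0)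
        have hij : ∃ i j : ℕ, i < j ∧ g^[i] τ0 = g^[j] τ0 := by
          rcases Nat.lt_or_ge i j with h | h
          · exact ⟨i, j, h, heq⟩
          · exact ⟨j, i, lt_of_le_of_ne h (Ne.symm hne'), heq.symm⟩
        obtain ⟨i, j, hij, heq2⟩ := hij
        -- cycle at a := g^[i] τ0
        set a : ↥D := g^[i] τ0 with ha
        have hcyc : g^[j - i] a = a := by
          rw [ha, ← Function.iterate_add_apply, show j - i + i = j by omega]
          exact heq2.symm
        have hchain2 : ∀ k : ℕ, 0 < k → Relation.TransGen (VStep K V)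
            ((g^[k] a : ↥D) : Finset α) ((a : ↥D) : Finset α) := by
          intro k hk
          induction k with
          | zero => omega
          | succ k ihk =>
            rcases Nat.eq_zero_or_pos k with h0 | hpos
            · subst h0; simpa using hg2 a
            · have h2 : Relation.TransGen (VStep K V)
                  ((g^[k+1] a : ↥D) : Finset α) ((g^[k] a : ↥D) : Finset α) := by
                rw [Function.iterate_succ_apply']
                exact hg2 _
              exact h2.trans (ihk hpos)
        have := hchain2 (j - i) (by omega)
        rw [hcyc] at this
        exact hV.2.2 _ this
      obtain ⟨τs, hτsK, hτsN, hτssrc⟩ := hsource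
      set σ : Finset α := sfn τs hτsK hτsN with hσdef
      have hmemV : (σ, τs) ∈ V := hsfn τs hτsK hτsN
      obtain ⟨hσK', _, hσsub', hσcard⟩ := hV.1 _ hmemV
      have hσK : σ ∈ K := hσK'
      have hσsub : σ ⊆ τs := hσsub'
      have hσcard' : τs.card = σ.card + 1 := hσcard
      -- τs is a maximal face
      have hτsmax : IsMaximalFace K τs := by
        refine ⟨hτsK, fun ρ hρ hsub => ?_⟩
        exact (Finset.eq_of_subset_of_card_le hsub
          (by rw [hτsN]; exact hmax ρ hρ)).symm
      -- σ is not maximal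
      have hσnotmax : ¬ IsMaximalFace K σ := by
        rintro ⟨_, hmax'⟩
        have heq := hmax' τs hτsK hσsub
        have h2 : τs.card = σ.card + 1 := hσcard'
        rw [heq] at h2
        omega
      -- every maximal face containing σ is τs
      have huniq : ∀ ρ : Finset α, IsMaximalFace K ρ ∧ σ ⊆ ρ → ρ = τs := by
        rintro ρ ⟨hρmax, hρsub⟩
        have hρne : ρ ≠ σ := by rintro rfl; exact hσnotmax hρmax
        have hss : σ ⊂ ρ := Finset.ssubset_iff_subset_ne.mpr ⟨hρsub, hρne.symm⟩
        have h1 : σ.card < ρ.card := Finset.card_lt_card hss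
        have h2 : ρ.card ≤ N := hmax ρ hρmax.1
        have h3 : ρ.card = N := by omega
        exact hτssrc ρ hρmax.1 h3 hρsub
      have hff : IsFreeFace K σ := ⟨hσK, hσnotmax, τs, ⟨hτsmax, hσsub⟩, huniq⟩
      have hσneτ : σ ≠ τs := by
        intro h
        have h2 : τs.card = σ.card + 1 := hσcard'
        rw [h] at h2
        omega
      set K' : Set (Finset α) := K \ {σ, τs} with hK'def
      have hec : ElemCollapse K K' := ⟨σ, τs, hff, hτsmax, hσsub, hσcard', rfl⟩
      -- K' is a complex
      have hK'sub : K' ⊆ K := Set.diff_subset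
      have hK'mem : ∀ ρ : Finset α, ρ ∈ K → ρ ≠ σ → ρ ≠ τs → ρ ∈ K' := by
        intro ρ h1 h2 h3
        exact ⟨h1, by simp [h2, h3]⟩
      have hK'complex : IsComplex K' := by
        constructor
        · exact fun ρ h => hK.1 ρ (hK'sub h)
        · intro ρ hρ τ hτsub hτne
          have hτK : τ ∈ K := hK.2 ρ (hK'sub hρ) τ hτsub hτne
          refine hK'mem τ hτK ?_ ?_
          · rintro rfl
            -- σ ⊆ ρ with ρ ∈ K', contradiction
            have hρne : ρ ≠ σ := by
              rintro rfl; exact hρ.2 (Or.inl rfl)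
            have hss : σ ⊂ ρ := Finset.ssubset_iff_subset_ne.mpr ⟨hτsub, hρne.symm⟩
            have h1 : σ.card < ρ.card := Finset.card_lt_card hss
            have h2 : ρ.card ≤ N := hmax ρ (hK'sub hρ)
            have := hτssrc ρ (hK'sub hρ) (by omega) hτsub
            exact hρ.2 (by right; exact this)
          · rintro rfl
            have := hτsmax.2 ρ (hK'sub hρ) hτsub
            exact hρ.2 (by right; exact this)
      -- the restricted gradient field
      set V' : Set (Finset α × Finset α) := V \ {(σ, τs)} with hV'def
      have hV'sub : V' ⊆ V := Set.diff_subset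
      have hVne : ∀ q ∈ V', q.1 ≠ σ ∧ q.1 ≠ τs ∧ q.2 ≠ σ ∧ q.2 ≠ τs := by
        rintro q ⟨hq, hqne⟩
        have hne1 : q ≠ (σ, τs) := by
          intro h; exact hqne (by rw [h]; rfl)
        refine ⟨?_, ?_, ?_, ?_⟩
        · intro h; exact hne1 (hV.2.1 q hq (σ, τs) hmemV (Or.inl h))
        · intro h; exact hne1 (hV.2.1 q hq (σ, τs) hmemV (Or.inr (Or.inl h)))
        · intro h; exact hne1 (hV.2.1 q hq (σ, τs) hmemV (Or.inr (Or.inr (Or.inl h))))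
        · intro h; exact hne1 (hV.2.1 q hq (σ, τs) hmemV (Or.inr (Or.inr (Or.inr h))))
      have hstep : ∀ x y : Finset α, VStep K' V' x y → VStep K V x y := by
        intro x y h
        rcases h with ⟨hx, hy, hf, hnv⟩ | hv'
        · refine Or.inl ⟨hK'sub hx, hK'sub hy, hf, ?_⟩
          intro hin
          by_cases h : (y, x) = (σ, τs)
          · have : x = τs := congrArg Prod.snd h
            subst this
            exact hx.2 (Or.inr rfl)
          · exact hnv ⟨hin, h⟩
        · exact Or.inr (hV'sub hv')
      have hV'dgvf : IsDGVF K' V' := by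
        refine ⟨?_, ?_, ?_⟩
        · intro q hq
          obtain ⟨h1, h2, h3⟩ := hV.1 q (hV'sub hq)
          obtain ⟨hn1, hn2, hn3, hn4⟩ := hVne q hq
          exact ⟨hK'mem _ h1 hn1 hn2, hK'mem _ h2 hn3 hn4, h3⟩
        · intro q hq r hr h
          exact hV.2.1 q (hV'sub hq) r (hV'sub hr) h
        · intro ρ hρ
          exact hV.2.2 ρ (Relation.TransGen.mono hstep _ _ hρ)
      -- critical sets agree
      have hcritset : {ρ : Finset α | IsCritical K' V' ρ} =
          {ρ : Finset α | IsCritical K V ρ} := by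
        ext ρ
        simp only [Set.mem_setOf_eq]
        constructor
        · rintro ⟨hρK', hρun⟩
          refine ⟨hK'sub hρK', fun q hq => ?_⟩
          by_cases h : q = (σ, τs)
          · subst h
            constructor
            · intro h'; exact hρK'.2 (Or.inl h')
            · intro h'; exact hρK'.2 (Or.inr h')
          · exact hρun q ⟨hq, h⟩
        · rintro ⟨hρK, hρun⟩
          have h1 := hρun (σ, τs) hmemV
          exact ⟨hK'mem ρ hρK h1.1 h1.2, fun q hq => hρun q (hV'sub hq)⟩
      -- cardinality bound
      have hpair : ({σ, τs} : Set (Finset α)) ⊆ K := by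
        rintro ρ (rfl | rfl)
        · exact hσK
        · exact hτsK
      have hK'card : K'.ncard ≤ n := by
        have h1 : K'.ncard = K.ncard - ({σ, τs} : Set (Finset α)).ncard :=
          Set.ncard_diff hpair (Set.toFinite _)
        have h2 : ({σ, τs} : Set (Finset α)).ncard = 2 := Set.ncard_pair hσneτ
        have h3 : 1 < K.ncard := by
          rw [Set.one_lt_ncard hfin]
          exact ⟨σ, hσK, τs, hτsK, hσneτ⟩
        omega
      have hK'ne : K'.Nonempty := by
        refine ⟨{v0}, hK'mem _ hv0K ?_ ?_⟩
        · exact (hv0c.2 (σ, τs) hmemV).1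
        · exact (hv0c.2 (σ, τs) hmemV).2
      have hK'cc : criticalCount K' V' ≤ 1 := by
        rw [criticalCount, hcritset]; exact hcc
      obtain ⟨q, hq⟩ := ih K' V' (hfin.subset hK'sub) hK'complex hK'ne hV'dgvf hK'cc hK'card
      exact ⟨q, Relation.ReflTransGen.head hec hq⟩

section Transport

variable {β : Type*} [DecidableEq β]

/-- Push a complex forward along a vertex map. -/
def mapC (f : α → β) (L : Set (Finset α)) : Set (Finset β) :=
  (fun s : Finset α => s.image f) '' L

lemma mapC_maximal_iff {f : α → β} (hf : Function.Injective f)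
    {L : Set (Finset α)} {τ : Finset α} (hτ : τ ∈ L) :
    IsMaximalFace (mapC f L) (τ.image f) ↔ IsMaximalFace L τ := by
  constructor
  · rintro ⟨hmem, hmax⟩
    refine ⟨hτ, fun ρ hρ hsub => ?_⟩
    have h1 : τ.image f ⊆ ρ.image f := Finset.image_subset_image hsub
    have h2 := hmax (ρ.image f) ⟨ρ, hρ, rfl⟩ h1
    exact Finset.image_injective hf h2
  · rintro ⟨hmem, hmax⟩
    refine ⟨⟨τ, hτ, rfl⟩, ?_⟩
    rintro _ ⟨ρ, hρ, rfl⟩ hsub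
    rw [Finset.image_subset_image_iff hf] at hsub
    rw [hmax ρ hρ hsub]

lemma elemCollapse_preimage {f : α → β} (hf : Function.Injective f)
    {L : Set (Finset α)} {M : Set (Finset β)}
    (h : ElemCollapse (mapC f L) M) :
    ∃ L' : Set (Finset α), M = mapC f L' ∧ ElemCollapse L L' := by
  obtain ⟨σh, τh, ⟨hσmem, hσnmax, τu, hτu, hτuu⟩, hτmax, hsub, hcard, hM⟩ := h
  obtain ⟨σ, hσL, rfl⟩ := hσmem
  obtain ⟨τ, hτL, rfl⟩ := hτmax.1
  have hστ : σ ⊆ τ := (Finset.image_subset_image_iff hf).mp hsub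
  have hcard' : τ.card = σ.card + 1 := by
    rwa [Finset.card_image_of_injective _ hf, Finset.card_image_of_injective _ hf] at hcard
  have hτmax' : IsMaximalFace L τ := (mapC_maximal_iff hf hτL).mp hτmax
  have hσnmax' : ¬ IsMaximalFace L σ := fun h => hσnmax ((mapC_maximal_iff hf hσL).mpr h)
  have hff : IsFreeFace L σ := by
    refine ⟨hσL, hσnmax', τ, ⟨hτmax', hστ⟩, ?_⟩
    rintro ρ ⟨hρmax, hρsub⟩
    have h1 : IsMaximalFace (mapC f L) (ρ.image f) := (mapC_maximal_iff hf hρmax.1).mpr hρmax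
    have h2 : σ.image f ⊆ ρ.image f := Finset.image_subset_image hρsub
    have h3 := hτuu (ρ.image f) ⟨h1, h2⟩
    have h4 := hτuu (τ.image f) ⟨hτmax, hsub⟩
    exact Finset.image_injective hf (h3.trans h4.symm)
  refine ⟨L \ {σ, τ}, ?_, σ, τ, hff, hτmax', hστ, hcard', rfl⟩
  rw [hM, mapC, mapC, Set.image_diff (Finset.image_injective hf)]
  congr 1
  rw [Set.image_insert_eq, Set.image_singleton]

lemma collapses_preimage {f : α → β} (hf : Function.Injective f)
    {X : Set (Finset β)} {M : Set (Finset β)} (h : Collapses X M) :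
    ∀ L : Set (Finset α), X = mapC f L → ∃ L', M = mapC f L' ∧ Collapses L L' := by
  induction h using Relation.ReflTransGen.head_induction_on with
  | refl => exact fun L hL => ⟨L, hL, Relation.ReflTransGen.refl⟩
  | head hstep _ ih =>
    intro L hL
    subst hL
    obtain ⟨L1, rfl, he⟩ := elemCollapse_preimage hf hstep
    obtain ⟨L', hM, hc⟩ := ih L1 rfl
    exact ⟨L', hM, Relation.ReflTransGen.head he hc⟩

lemma collapsible_of_mapC {f : α → β} (hf : Function.Injective f)
    {K : Set (Finset α)} (h : Collapsible (mapC f K)) : Collapsible K := by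
  obtain ⟨q, hq⟩ := h
  obtain ⟨L', hM, hc⟩ := collapses_preimage hf hq K rfl
  have h1 : ({q} : Finset β) ∈ mapC f L' := by rw [← hM]; rfl
  obtain ⟨σ, hσL, hσeq⟩ := h1
  have hσcard : σ.card = 1 := by
    have := congrArg Finset.card hσeq
    rwa [Finset.card_image_of_injective _ hf, Finset.card_singleton] at this
  obtain ⟨x, rfl⟩ := Finset.card_eq_one.mp hσcard
  have hL' : L' = {({x} : Finset α)} := by
    apply Set.Subset.antisymm
    · intro ρ hρ
      have h2 : ρ.image f ∈ mapC f L' := ⟨ρ, hρ, rfl⟩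
      rw [← hM] at h2
      have h3 : ρ.image f = ({x} : Finset α).image f := by
        have hq' : ({x} : Finset α).image f = {q} := hσeq
        rw [hq']; exact h2
      exact Finset.image_injective hf h3
    · intro ρ hρ
      rw [Set.mem_singleton_iff] at hρ
      subst hρ
      exact hσL
  exact ⟨x, hL' ▸ hc⟩

lemma mapC_isComplex {f : α → β} (hf : Function.Injective f)
    {K : Set (Finset α)} (hK : IsComplex K) : IsComplex (mapC f K) := by
  constructor
  · rintro _ ⟨σ, hσ, rfl⟩
    exact (hK.1 σ hσ).image f
  · rintro _ ⟨σ, hσ, rfl⟩ τ hτsub hτne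
    obtain ⟨τ', hτ'sub, rfl⟩ := Finset.subset_image_iff.mp hτsub
    have : τ'.Nonempty := by
      rwa [Finset.image_nonempty] at hτne
    exact ⟨τ', hK.2 σ hσ τ' hτ'sub this, rfl⟩

end Transport

/-- Vertex type of the wedge. -/
abbrev Bt (α : Type*) (p : α) (m : ℕ) : Type _ := Option ({x : α // x ≠ p} × Fin m)

theorem stmt5' {α : Type*} [DecidableEq α] (K : Set (Finset α)) (hfin : K.Finite)
    (hK : IsComplex K) (p : α)
    (hp : ({p} : Finset α) ∈ K) (m : ℕ) (hm : 0 < m)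
    (hnc : ¬ Collapsible K)
    (V : Set (Finset (Option ({x : α // x ≠ p} × Fin m)) ×
      Finset (Option ({x : α // x ≠ p} × Fin m))))
    (hV : IsDGVF (wedge K p m) V) :
    m < criticalCount (wedge K p m) V := by
  classical
  set f : Fin m → α → (Bt α p m) := fun i x =>
    if h : x = p then none else some (⟨x, h⟩, i) with hf
  set W : Set (Finset (Bt α p m)) := wedge K p m with hW
  have hKne : K.Nonempty := ⟨{p}, hp⟩
  have hinj : ∀ i : Fin m, Function.Injective (f i) := by
    intro i a b hab
    by_cases ha : a = p <;> by_cases hb : b = p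
    · rw [ha, hb]
    · simp [hf, ha, hb] at hab
    · simp [hf, ha, hb] at hab
    · simp only [hf] at hab
      rw [dif_neg ha, dif_neg hb] at hab
      have h2 := Option.some_injective _ hab
      exact Subtype.ext_iff.mp (Prod.ext_iff.mp h2).1
  have hWeq : W = ⋃ i : Fin m, mapC (f i) K := by
    ext ρ
    simp only [hW, wedge, Set.mem_setOf_eq, Set.mem_iUnion, mapC, Set.mem_image]
    constructor
    · rintro ⟨i, σ, hσ, rfl⟩; exact ⟨i, σ, hσ, rfl⟩
    · rintro ⟨i, σ, hσ, rfl⟩; exact ⟨i, σ, hσ, rfl⟩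
  have hcopy_sub : ∀ i : Fin m, mapC (f i) K ⊆ W := by
    intro i ρ hρ
    rw [hWeq]
    exact Set.mem_iUnion.mpr ⟨i, hρ⟩
  have hmemW : ∀ ρ ∈ W, ∃ i : Fin m, ρ ∈ mapC (f i) K := by
    intro ρ hρ
    rw [hWeq] at hρ
    exact Set.mem_iUnion.mp hρ
  have hWfin : W.Finite := by
    rw [hWeq]
    exact Set.finite_iUnion fun i => hfin.image _
  have hcopy_complex : ∀ i : Fin m, IsComplex (mapC (f i) K) :=
    fun i => mapC_isComplex (hinj i) hK
  have hWcomplex : IsComplex W := by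
    constructor
    · intro ρ hρ
      obtain ⟨i, hi⟩ := hmemW ρ hρ
      exact (hcopy_complex i).1 ρ hi
    · intro ρ hρ τ hτsub hτne
      obtain ⟨i, hi⟩ := hmemW ρ hρ
      exact hcopy_sub i ((hcopy_complex i).2 ρ hi τ hτsub hτne)
  have hnone : ∀ i : Fin m, ({(none : Bt α p m)} : Finset (Bt α p m)) ∈ mapC (f i) K := by
    intro i
    refine ⟨{p}, hp, ?_⟩
    simp [hf]
  have hinter : ∀ i j : Fin m, i ≠ j → ∀ ρ : Finset (Bt α p m),
      ρ ∈ mapC (f i) K → ρ ∈ mapC (f j) K → ρ = {(none : Bt α p m)} := by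
    intro i j hij ρ hρi hρj
    obtain ⟨σ, hσ, hσeq⟩ := hρi
    obtain ⟨σ', hσ', hσeq'⟩ := hρj
    have hσeq1 : σ.image (f i) = ρ := hσeq
    have hσeq2 : σ'.image (f j) = ρ := hσeq'
    have hsub : ρ ⊆ {(none : Bt α p m)} := by
      intro y hy
      rw [Finset.mem_singleton]
      by_contra hyne
      have hyi0 : y ∈ σ.image (f i) := by rw [hσeq1]; exact hy
      obtain ⟨x, hx, hfx⟩ := Finset.mem_image.mp hyi0
      have hxp : x ≠ p := by
        intro h; subst h; apply hyne; rw [← hfx]; simp [hf]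
      have hyi : y = some (⟨x, hxp⟩, i) := by rw [← hfx]; simp [hf, hxp]
      have hyj0 : y ∈ σ'.image (f j) := by rw [hσeq2]; exact hy
      obtain ⟨x', hx', hfx'⟩ := Finset.mem_image.mp hyj0
      have hxp' : x' ≠ p := by
        intro h; subst h; apply hyne; rw [← hfx']; simp [hf]
      have hyj : y = some (⟨x', hxp'⟩, j) := by rw [← hfx']; simp [hf, hxp']
      rw [hyi] at hyj
      have h2 : i = j := by
        have := Option.some_injective _ hyj
        exact (Prod.ext_iff.mp this).2
      exact hij h2
    have hne : ρ.Nonempty := by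
      rw [← hσeq1]; exact (hK.1 σ hσ).image _
    rcases Finset.subset_singleton_iff.mp hsub with h | h
    · exact absurd h (Finset.nonempty_iff_ne_empty.mp hne)
    · exact h
  -- restricted gradient fields
  set Vc : Fin m → Set (Finset (Bt α p m) × Finset (Bt α p m)) :=
    fun i => {q ∈ V | q.2 ∈ mapC (f i) K} with hVc
  have hdownclosed : ∀ (i : Fin m) (q : Finset (Bt α p m) × Finset (Bt α p m)), q ∈ V →
      q.2 ∈ mapC (f i) K → q.1 ∈ mapC (f i) K := by
    intro i q hq h2
    obtain ⟨h1W, h2W, hsub, _⟩ := hV.1 q hq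
    exact (hcopy_complex i).2 q.2 h2 q.1 hsub (hWcomplex.1 q.1 h1W)
  have hVcdgvf : ∀ i : Fin m, IsDGVF (mapC (f i) K) (Vc i) := by
    intro i
    refine ⟨?_, ?_, ?_⟩
    · rintro q ⟨hq, hq2⟩
      exact ⟨hdownclosed i q hq hq2, hq2, (hV.1 q hq).2.2⟩
    · rintro q ⟨hq, _⟩ r ⟨hr, _⟩ h
      exact hV.2.1 q hq r hr h
    · intro ρ hρ
      refine hV.2.2 ρ (Relation.TransGen.mono ?_ ρ ρ hρ)
      intro x y h
      rcases h with ⟨hx, hy, hfacet, hnv⟩ | hv'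
      · refine Or.inl ⟨hcopy_sub i hx, hcopy_sub i hy, hfacet, ?_⟩
        intro hin
        exact hnv ⟨hin, hx⟩
      · exact Or.inr hv'.1
  -- each copy is not collapsible, hence has at least 2 critical cells
  have hcritfin : ∀ i : Fin m, {ρ : Finset (Bt α p m) | IsCritical (mapC (f i) K) (Vc i) ρ}.Finite :=
    fun i => (hfin.image _).subset critical_subset
  have hcrit2 : ∀ i : Fin m,
      1 < {ρ : Finset (Bt α p m) | IsCritical (mapC (f i) K) (Vc i) ρ}.ncard := by
    intro i
    by_contra hle
    push_neg at hle
    have hcoll := collapsible_of_critical_le_one (mapC (f i) K).ncard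
      (mapC (f i) K) (Vc i) (hfin.image _) (hcopy_complex i)
      ⟨{(none : Bt α p m)}, hnone i⟩ (hVcdgvf i) hle le_rfl
    exact hnc (collapsible_of_mapC (hinj i) hcoll)
  -- critical cells of a copy (other than the wedge point) are critical in W
  have htransfer : ∀ (i : Fin m) (ρ : Finset (Bt α p m)),
      IsCritical (mapC (f i) K) (Vc i) ρ → ρ ≠ {(none : Bt α p m)} →
      IsCritical W V ρ := by
    intro i ρ hρ hρne
    refine ⟨hcopy_sub i hρ.1, fun q hq => ?_⟩
    obtain ⟨j, hj⟩ := hmemW q.2 (hV.1 q hq).2.1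
    constructor
    · intro h
      have h1 : ρ ∈ mapC (f j) K := h ▸ hdownclosed j q hq hj
      by_cases hij : i = j
      · subst hij
        exact (hρ.2 q ⟨hq, hj⟩).1 h
      · exact hρne (hinter i j hij ρ hρ.1 h1)
    · intro h
      have h1 : q.2 ∈ mapC (f i) K := h ▸ hρ.1
      exact (hρ.2 q ⟨hq, h1⟩).2 h
  -- pick a non-basepoint critical cell in each copy
  have hchoose : ∀ i : Fin m, ∃ ρ : Finset (Bt α p m),
      IsCritical (mapC (f i) K) (Vc i) ρ ∧ ρ ≠ {(none : Bt α p m)} := by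
    intro i
    obtain ⟨a, ha, b, hb, hab⟩ := (Set.one_lt_ncard (hcritfin i)).mp (hcrit2 i)
    by_cases h : a = {(none : Bt α p m)}
    · exact ⟨b, hb, fun hbn => hab (h.trans hbn.symm)⟩
    · exact ⟨a, ha, h⟩
  choose σc hσc hσcne using hchoose
  -- build m+1 distinct critical cells of (W, V)
  have hfinal : ∃ (h : Fin m → Finset (Bt α p m)) (e : Finset (Bt α p m)),
      Function.Injective h ∧ (∀ i, IsCritical W V (h i)) ∧ IsCritical W V e ∧
      ∀ i, e ≠ h i := by
    by_cases hb : ∃ q ∈ V, q.1 = ({(none : Bt α p m)} : Finset (Bt α p m))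
    · obtain ⟨q, hqV, hq1⟩ := hb
      obtain ⟨i0, hi0⟩ := hmemW q.2 (hV.1 q hqV).2.1
      have hq0 : q ∈ Vc i0 := ⟨hqV, hi0⟩
      have hnonecrit :
          ¬ IsCritical (mapC (f i0) K) (Vc i0) ({(none : Bt α p m)} : Finset (Bt α p m)) :=
        fun h => (h.2 q hq0).1 hq1.symm
      obtain ⟨a, ha, b, hbc, hab⟩ := (Set.one_lt_ncard (hcritfin i0)).mp (hcrit2 i0)
      have hane : a ≠ ({(none : Bt α p m)} : Finset (Bt α p m)) :=
        fun h => hnonecrit (h ▸ ha)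
      have hbne : b ≠ ({(none : Bt α p m)} : Finset (Bt α p m)) :=
        fun h => hnonecrit (h ▸ hbc)
      set h : Fin m → Finset (Bt α p m) := fun i => if i = i0 then a else σc i with hh
      have hmem : ∀ i, (IsCritical (mapC (f i) K) (Vc i) (h i)) ∧
          h i ≠ ({(none : Bt α p m)} : Finset (Bt α p m)) := by
        intro i
        by_cases hii : i = i0
        · have h2 : h i = a := by simp [hh, hii]
          rw [h2, hii]
          exact ⟨ha, hane⟩
        · have : h i = σc i := by simp [hh, hii]
          rw [this]
          exact ⟨hσc i, hσcne i⟩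
      have hinj2 : Function.Injective h := by
        intro i j hij
        by_contra hne
        refine (hmem i).2 (hinter i j hne (h i) ((hmem i).1).1 ?_)
        rw [hij]
        exact ((hmem j).1).1
      refine ⟨h, b, hinj2, fun i => htransfer i (h i) (hmem i).1 (hmem i).2,
        htransfer i0 b hbc hbne, ?_⟩
      intro i heq
      by_cases hii : i = i0
      · have h2 : h i = a := by simp [hh, hii]
        rw [h2] at heq
        exact hab (heq.symm)
      · have h1 : h i ∈ mapC (f i) K := ((hmem i).1).1
        rw [← heq] at h1
        exact hbne (hinter i0 i (fun hx => hii hx.symm) b hbc.1 h1)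
    · push_neg at hb
      have hnoneW : ({(none : Bt α p m)} : Finset (Bt α p m)) ∈ W :=
        hcopy_sub ⟨0, hm⟩ (hnone ⟨0, hm⟩)
      have hecrit : IsCritical W V ({(none : Bt α p m)} : Finset (Bt α p m)) := by
        refine ⟨hnoneW, fun q hq => ⟨fun h => hb q hq h.symm, fun h => ?_⟩⟩
        obtain ⟨h1W, h2W, hsub, hcard⟩ := hV.1 q hq
        have hc1 : q.2.card = 1 := by rw [← h]; simp
        have hc2 : 1 ≤ q.1.card := Finset.card_pos.mpr (hWcomplex.1 q.1 h1W)
        have hc3 : q.2.card = q.1.card + 1 := hcard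
        omega
      refine ⟨σc, ({(none : Bt α p m)} : Finset (Bt α p m)), ?_,
        fun i => htransfer i (σc i) (hσc i) (hσcne i), hecrit,
        fun i h => hσcne i h.symm⟩
      intro i j hij
      by_contra hne
      refine hσcne i (hinter i j hne (σc i) (hσc i).1 ?_)
      rw [hij]
      exact (hσc j).1
  obtain ⟨h, e, hinj2, hhc, hec, hene⟩ := hfinal
  have hsubS : ↑(insert e (Finset.image h Finset.univ)) ⊆
      {ρ : Finset (Bt α p m) | IsCritical W V ρ} := by
    intro ρ hρ
    simp only [Finset.coe_insert, Set.mem_insert_iff, Finset.coe_image,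
      Set.mem_image, Finset.mem_coe, Finset.mem_univ] at hρ
    rcases hρ with rfl | ⟨i, _, rfl⟩
    · exact hec
    · exact hhc i
  have henotin : e ∉ Finset.image h Finset.univ := by
    simp only [Finset.mem_image, Finset.mem_univ, true_and]
    rintro ⟨i, hi⟩
    exact hene i hi.symm
  have hcardS : (insert e (Finset.image h Finset.univ)).card = m + 1 := by
    rw [Finset.card_insert_of_notMem henotin,
      Finset.card_image_of_injective _ hinj2, Finset.card_univ, Fintype.card_fin]
  have hle : m + 1 ≤ criticalCount W V := by
    have h2 := Set.ncard_le_ncard hsubS (hWfin.subset critical_subset)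
    rwa [Set.ncard_coe_finset, hcardS] at h2
  exact Nat.lt_of_lt_of_le (Nat.lt_succ_self m) hle


/-- if `K` is not collapsible then every gradient vector field on the
wedge of `n^(c-1)` copies of `K` has more than `n^(c-1)` critical simplices. -/
theorem stmt5 {α : Type*} [DecidableEq α] (K : Set (Finset α)) (hfin : K.Finite)
    (hK : IsComplex K) (hconn : ComplexConnected K) (p : α)
    (hp : ({p} : Finset α) ∈ K) (c : ℕ) (hc : 0 < c)
    (hnc : ¬ Collapsible K)
    (V : Set (Finset (Option ({x : α // x ≠ p} × Fin (K.ncard ^ (c - 1)))) ×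
      Finset (Option ({x : α // x ≠ p} × Fin (K.ncard ^ (c - 1))))))
    (hV : IsDGVF (wedge K p (K.ncard ^ (c - 1))) V) :
    K.ncard ^ (c - 1) < criticalCount (wedge K p (K.ncard ^ (c - 1))) V := by
  have hm : 0 < K.ncard ^ (c - 1) :=
    pow_pos ((Set.ncard_pos hfin).mpr ⟨{p}, hp⟩) _
  exact stmt5' K hfin hK p hp _ hm hnc V hV

end MorseApprox
end

section
/- The modified dunce hat D is collapsible, and the edge ω = {s,u} is its unique free face. -/
namespace MorseApprox

variable {α : Type*}

/-- The thirteen triangles of the modified dunce hat, with vertices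
`q=0, r=1, s=2, t=3, u=4, v=5, w=6`. -/
def dunceTriangles : Set (Finset (Fin 7)) :=
  {{1, 3, 5}, {1, 3, 6}, {3, 4, 5}, {0, 4, 5}, {0, 2, 5}, {1, 2, 5}, {0, 1, 2},
   {0, 1, 4}, {1, 4, 6}, {0, 4, 6}, {0, 2, 6}, {2, 3, 6}, {2, 3, 4}}

/-- The modified dunce hat: the thirteen triangles together with all their
nonempty subsets. Distinguished simplices: `ω = {s,u} = {2,4}`, `η = {2,3}`,
`φ = {t,v} = {3,5}`, `ψ = {t,w} = {3,6}`, `Γ = {s,t,u} = {2,3,4}`. -/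
def modifiedDunceHat : Set (Finset (Fin 7)) :=
  {σ | σ.Nonempty ∧ ∃ τ ∈ dunceTriangles, σ ⊆ τ}



section DunceProof

set_option maxRecDepth 100000

/-- Decode a bitmask into a subset of `Fin 7`. -/
def d (n : Fin 128) : Finset (Fin 7) :=
  Finset.univ.filter (fun i => n.val.testBit i.val)

lemma mem_d {i : Fin 7} {n : Fin 128} : i ∈ d n ↔ n.val.testBit i.val := by
  simp [d]

lemma d_inj : Function.Injective d := by
  intro a b h
  apply Fin.ext
  apply Nat.eq_of_testBit_eq
  intro i
  by_cases hi : i < 7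
  · have := Finset.ext_iff.mp h ⟨i, hi⟩
    simpa [mem_d] using this
  · have h7 : (2 : ℕ) ^ 7 ≤ 2 ^ i := Nat.pow_le_pow_right (by norm_num) (le_of_not_gt hi)
    rw [Nat.testBit_lt_two_pow (lt_of_lt_of_le a.isLt h7),
      Nat.testBit_lt_two_pow (lt_of_lt_of_le b.isLt h7)]

lemma d_surj : Function.Surjective d := by
  have : Function.Bijective d := by
    rw [Fintype.bijective_iff_injective_and_card]
    exact ⟨d_inj, by simp [Fintype.card_finset]⟩
  exact this.2

/-- Mask-level subset relation. -/
def msub (a b : Fin 128) : Prop :=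
  ∀ i : Fin 7, a.val.testBit i.val = true → b.val.testBit i.val = true

instance (a b : Fin 128) : Decidable (msub a b) := by unfold msub; infer_instance

lemma d_sub (a b : Fin 128) : d a ⊆ d b ↔ msub a b := by
  constructor
  · intro h i hi
    have := h (x := i) (mem_d.mpr hi)
    exact mem_d.mp this
  · intro h i hi
    exact mem_d.mpr (h i (mem_d.mp hi))

/-- The complex encoded by a list of masks. -/
def S (l : List (Fin 128)) : Set (Finset (Fin 7)) := {σ | ∃ n ∈ l, σ = d n}

lemma mem_S_iff (l : List (Fin 128)) (m : Fin 128) : d m ∈ S l ↔ m ∈ l := by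
  constructor
  · rintro ⟨n, hn, hdn⟩
    rwa [d_inj hdn]
  · intro h
    exact ⟨m, h, rfl⟩

def maxM (l : List (Fin 128)) (m : Fin 128) : Prop :=
  m ∈ l ∧ ∀ n ∈ l, msub m n → n = m

instance (l : List (Fin 128)) (m : Fin 128) : Decidable (maxM l m) := by
  unfold maxM; infer_instance

def freeM (l : List (Fin 128)) (m : Fin 128) : Prop :=
  m ∈ l ∧ ¬ maxM l m ∧
    ∃ t ∈ l, (maxM l t ∧ msub m t) ∧ ∀ r ∈ l, (maxM l r ∧ msub m r) → r = t

instance (l : List (Fin 128)) (m : Fin 128) : Decidable (freeM l m) := by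
  unfold freeM; infer_instance

lemma max_iff (l : List (Fin 128)) (m : Fin 128) :
    IsMaximalFace (S l) (d m) ↔ maxM l m := by
  constructor
  · rintro ⟨⟨n, hn, hdn⟩, hmax⟩
    have hnm : n = m := d_inj hdn.symm
    subst hnm
    refine ⟨hn, fun k hk hsub => ?_⟩
    exact d_inj (hmax (d k) ⟨k, hk, rfl⟩ ((d_sub _ _).mpr hsub))
  · rintro ⟨hm, hmax⟩
    refine ⟨⟨m, hm, rfl⟩, ?_⟩
    rintro ρ ⟨k, hk, rfl⟩ hsub
    rw [hmax k hk ((d_sub _ _).mp hsub)]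

lemma free_iff (l : List (Fin 128)) (m : Fin 128) :
    IsFreeFace (S l) (d m) ↔ freeM l m := by
  unfold IsFreeFace freeM
  rw [mem_S_iff, max_iff]
  refine and_congr_right fun _ => and_congr_right fun _ => ?_
  constructor
  · rintro ⟨τ, ⟨hmax, hsub⟩, huniq⟩
    obtain ⟨t, ht, rfl⟩ := hmax.1
    refine ⟨t, ht, ⟨(max_iff l t).mp hmax, (d_sub _ _).mp hsub⟩, ?_⟩
    intro r hr ⟨hrmax, hrsub⟩
    exact d_inj (huniq (d r) ⟨(max_iff l r).mpr hrmax, (d_sub _ _).mpr hrsub⟩)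
  · rintro ⟨t, ht, ⟨htmax, htsub⟩, huniq⟩
    refine ⟨d t, ⟨(max_iff l t).mpr htmax, (d_sub _ _).mpr htsub⟩, ?_⟩
    rintro τ ⟨hmax, hsub⟩
    obtain ⟨r, hr, rfl⟩ := hmax.1
    rw [huniq r hr ⟨(max_iff l r).mp hmax, (d_sub _ _).mp hsub⟩]

lemma elem_step (l l' : List (Fin 128)) (a b : Fin 128)
    (h1 : freeM l a) (h2 : maxM l b) (h3 : msub a b)
    (h4 : (d b).card = (d a).card + 1)
    (h5 : ∀ n : Fin 128, n ∈ l' ↔ n ∈ l ∧ ¬(n = a ∨ n = b)) :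
    ElemCollapse (S l) (S l') := by
  refine ⟨d a, d b, (free_iff l a).mpr h1, (max_iff l b).mpr h2, (d_sub a b).mpr h3, h4, ?_⟩
  ext σ
  simp only [Set.mem_diff, Set.mem_insert_iff, Set.mem_singleton_iff, S, Set.mem_setOf_eq]
  constructor
  · rintro ⟨n, hn, rfl⟩
    obtain ⟨hl, hne⟩ := (h5 n).mp hn
    exact ⟨⟨n, hl, rfl⟩, fun h => hne (h.imp (fun e => d_inj e) (fun e => d_inj e))⟩
  · rintro ⟨⟨n, hl, rfl⟩, hne⟩
    exact ⟨n, (h5 n).mpr ⟨hl, fun h => hne (h.imp (congrArg d) (congrArg d))⟩, rfl⟩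

def L0 : List (Fin 128) := [1, 2, 4, 8, 16, 32, 64, 3, 5, 17, 33, 65, 6, 10, 18, 34, 66, 12, 20, 36, 68, 24, 40, 72, 48, 80, 7, 19, 37, 69, 49, 81, 38, 42, 74, 82, 28, 76, 56]
def L1 : List (Fin 128) := [1, 2, 4, 8, 16, 32, 64, 3, 5, 17, 33, 65, 6, 10, 18, 34, 66, 12, 36, 68, 24, 40, 72, 48, 80, 7, 19, 37, 69, 49, 81, 38, 42, 74, 82, 76, 56]
def L2 : List (Fin 128) := [1, 2, 4, 8, 16, 32, 64, 3, 5, 17, 33, 65, 6, 10, 18, 34, 66, 36, 68, 24, 40, 72, 48, 80, 7, 19, 37, 69, 49, 81, 38, 42, 74, 82, 56]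
def L3 : List (Fin 128) := [1, 2, 4, 8, 16, 32, 64, 3, 5, 17, 33, 65, 6, 10, 18, 34, 66, 36, 24, 40, 72, 48, 80, 7, 19, 37, 49, 81, 38, 42, 74, 82, 56]
def L4 : List (Fin 128) := [1, 2, 4, 8, 16, 32, 64, 3, 5, 17, 33, 65, 6, 10, 18, 34, 66, 36, 40, 72, 48, 80, 7, 19, 37, 49, 81, 38, 42, 74, 82]
def L5 : List (Fin 128) := [1, 2, 4, 8, 16, 32, 64, 3, 5, 17, 33, 65, 6, 10, 18, 34, 66, 36, 40, 72, 80, 7, 19, 37, 81, 38, 42, 74, 82]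
def L6 : List (Fin 128) := [1, 2, 4, 8, 16, 32, 64, 3, 5, 17, 33, 65, 6, 10, 18, 34, 66, 36, 40, 80, 7, 19, 37, 81, 38, 42, 82]
def L7 : List (Fin 128) := [1, 2, 4, 8, 16, 32, 64, 3, 5, 17, 65, 6, 10, 18, 34, 66, 36, 40, 80, 7, 19, 81, 38, 42, 82]
def L8 : List (Fin 128) := [1, 2, 4, 8, 16, 32, 64, 3, 5, 17, 6, 10, 18, 34, 66, 36, 40, 80, 7, 19, 38, 42, 82]
def L9 : List (Fin 128) := [1, 2, 4, 8, 16, 32, 64, 3, 5, 17, 6, 10, 18, 34, 66, 36, 40, 7, 19, 38, 42]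
def L10 : List (Fin 128) := [1, 2, 4, 8, 16, 32, 64, 3, 5, 17, 6, 10, 34, 66, 36, 40, 7, 38, 42]
def L11 : List (Fin 128) := [1, 2, 4, 8, 16, 32, 64, 5, 17, 6, 10, 34, 66, 36, 40, 38, 42]
def L12 : List (Fin 128) := [1, 2, 4, 8, 32, 64, 5, 6, 10, 34, 66, 36, 40, 38, 42]
def L13 : List (Fin 128) := [1, 2, 4, 8, 32, 64, 5, 10, 34, 66, 36, 40, 42]
def L14 : List (Fin 128) := [1, 2, 4, 8, 32, 64, 5, 10, 66, 36, 40]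
def L15 : List (Fin 128) := [1, 2, 4, 8, 32, 5, 10, 36, 40]
def L16 : List (Fin 128) := [1, 4, 8, 32, 5, 36, 40]
def L17 : List (Fin 128) := [1, 4, 32, 5, 36]
def L18 : List (Fin 128) := [1, 4, 5]
def L19 : List (Fin 128) := [1]

lemma step0 : ElemCollapse (S L0) (S L1) :=
  elem_step L0 L1 20 28 (by decide) (by decide) (by decide) (by decide) (by decide)
lemma step1 : ElemCollapse (S L1) (S L2) :=
  elem_step L1 L2 12 76 (by decide) (by decide) (by decide) (by decide) (by decide)
lemma step2 : ElemCollapse (S L2) (S L3) :=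
  elem_step L2 L3 68 69 (by decide) (by decide) (by decide) (by decide) (by decide)
lemma step3 : ElemCollapse (S L3) (S L4) :=
  elem_step L3 L4 24 56 (by decide) (by decide) (by decide) (by decide) (by decide)
lemma step4 : ElemCollapse (S L4) (S L5) :=
  elem_step L4 L5 48 49 (by decide) (by decide) (by decide) (by decide) (by decide)
lemma step5 : ElemCollapse (S L5) (S L6) :=
  elem_step L5 L6 72 74 (by decide) (by decide) (by decide) (by decide) (by decide)
lemma step6 : ElemCollapse (S L6) (S L7) :=
  elem_step L6 L7 33 37 (by decide) (by decide) (by decide) (by decide) (by decide)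
lemma step7 : ElemCollapse (S L7) (S L8) :=
  elem_step L7 L8 65 81 (by decide) (by decide) (by decide) (by decide) (by decide)
lemma step8 : ElemCollapse (S L8) (S L9) :=
  elem_step L8 L9 80 82 (by decide) (by decide) (by decide) (by decide) (by decide)
lemma step9 : ElemCollapse (S L9) (S L10) :=
  elem_step L9 L10 18 19 (by decide) (by decide) (by decide) (by decide) (by decide)
lemma step10 : ElemCollapse (S L10) (S L11) :=
  elem_step L10 L11 3 7 (by decide) (by decide) (by decide) (by decide) (by decide)
lemma step11 : ElemCollapse (S L11) (S L12) :=
  elem_step L11 L12 16 17 (by decide) (by decide) (by decide) (by decide) (by decide)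
lemma step12 : ElemCollapse (S L12) (S L13) :=
  elem_step L12 L13 6 38 (by decide) (by decide) (by decide) (by decide) (by decide)
lemma step13 : ElemCollapse (S L13) (S L14) :=
  elem_step L13 L14 34 42 (by decide) (by decide) (by decide) (by decide) (by decide)
lemma step14 : ElemCollapse (S L14) (S L15) :=
  elem_step L14 L15 64 66 (by decide) (by decide) (by decide) (by decide) (by decide)
lemma step15 : ElemCollapse (S L15) (S L16) :=
  elem_step L15 L16 2 10 (by decide) (by decide) (by decide) (by decide) (by decide)
lemma step16 : ElemCollapse (S L16) (S L17) :=
  elem_step L16 L17 8 40 (by decide) (by decide) (by decide) (by decide) (by decide)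
lemma step17 : ElemCollapse (S L17) (S L18) :=
  elem_step L17 L18 32 36 (by decide) (by decide) (by decide) (by decide) (by decide)
lemma step18 : ElemCollapse (S L18) (S L19) :=
  elem_step L18 L19 4 5 (by decide) (by decide) (by decide) (by decide) (by decide)

lemma chainD : Collapses (S L0) (S L19) :=
  Relation.ReflTransGen.head step0 (Relation.ReflTransGen.head step1 (Relation.ReflTransGen.head step2 (Relation.ReflTransGen.head step3 (Relation.ReflTransGen.head step4 (Relation.ReflTransGen.head step5 (Relation.ReflTransGen.head step6 (Relation.ReflTransGen.head step7 (Relation.ReflTransGen.head step8 (Relation.ReflTransGen.head step9 (Relation.ReflTransGen.head step10 (Relation.ReflTransGen.head step11 (Relation.ReflTransGen.head step12 (Relation.ReflTransGen.head step13 (Relation.ReflTransGen.head step14 (Relation.ReflTransGen.head step15 (Relation.ReflTransGen.head step16 (Relation.ReflTransGen.head step17 (Relation.ReflTransGen.head step18 (Relation.ReflTransGen.refl)))))))))))))))))))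

lemma mdh_eq : modifiedDunceHat = S L0 := by
  have key : ∀ n : Fin 128, (n ≠ 0 ∧ (msub n 42 ∨ msub n 74 ∨ msub n 56 ∨ msub n 49 ∨ msub n 37 ∨ msub n 38 ∨ msub n 7 ∨ msub n 19 ∨ msub n 82 ∨ msub n 81 ∨ msub n 69 ∨ msub n 76 ∨ msub n 28)) ↔ n ∈ L0 := by decide
  have dne : ∀ n : Fin 128, (d n).Nonempty ↔ n ≠ 0 := by decide
  have hT0 : ({1, 3, 5} : Finset (Fin 7)) = d 42 := by decide
  have hT1 : ({1, 3, 6} : Finset (Fin 7)) = d 74 := by decide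
  have hT2 : ({3, 4, 5} : Finset (Fin 7)) = d 56 := by decide
  have hT3 : ({0, 4, 5} : Finset (Fin 7)) = d 49 := by decide
  have hT4 : ({0, 2, 5} : Finset (Fin 7)) = d 37 := by decide
  have hT5 : ({1, 2, 5} : Finset (Fin 7)) = d 38 := by decide
  have hT6 : ({0, 1, 2} : Finset (Fin 7)) = d 7 := by decide
  have hT7 : ({0, 1, 4} : Finset (Fin 7)) = d 19 := by decide
  have hT8 : ({1, 4, 6} : Finset (Fin 7)) = d 82 := by decide
  have hT9 : ({0, 4, 6} : Finset (Fin 7)) = d 81 := by decide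
  have hT10 : ({0, 2, 6} : Finset (Fin 7)) = d 69 := by decide
  have hT11 : ({2, 3, 6} : Finset (Fin 7)) = d 76 := by decide
  have hT12 : ({2, 3, 4} : Finset (Fin 7)) = d 28 := by decide
  ext σ
  obtain ⟨n, rfl⟩ := d_surj σ
  rw [show (d n ∈ S L0) ↔ n ∈ L0 from mem_S_iff L0 n, ← key n]
  simp only [modifiedDunceHat, Set.mem_setOf_eq, dunceTriangles, Set.mem_insert_iff,
    Set.mem_singleton_iff]
  constructor
  · rintro ⟨hne, τ, hτ, hsub⟩
    refine ⟨(dne n).mp hne, ?_⟩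
    rcases hτ with rfl|rfl|rfl|rfl|rfl|rfl|rfl|rfl|rfl|rfl|rfl|rfl|rfl
    · exact Or.inl ((d_sub n 42).mp (hT0 ▸ hsub))
    · exact Or.inr (Or.inl ((d_sub n 74).mp (hT1 ▸ hsub)))
    · exact Or.inr (Or.inr (Or.inl ((d_sub n 56).mp (hT2 ▸ hsub))))
    · exact Or.inr (Or.inr (Or.inr (Or.inl ((d_sub n 49).mp (hT3 ▸ hsub)))))
    · exact Or.inr (Or.inr (Or.inr (Or.inr (Or.inl ((d_sub n 37).mp (hT4 ▸ hsub))))))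
    · exact Or.inr (Or.inr (Or.inr (Or.inr (Or.inr (Or.inl ((d_sub n 38).mp (hT5 ▸ hsub)))))))
    · exact Or.inr (Or.inr (Or.inr (Or.inr (Or.inr (Or.inr (Or.inl ((d_sub n 7).mp (hT6 ▸ hsub))))))))
    · exact Or.inr (Or.inr (Or.inr (Or.inr (Or.inr (Or.inr (Or.inr (Or.inl ((d_sub n 19).mp (hT7 ▸ hsub)))))))))
    · exact Or.inr (Or.inr (Or.inr (Or.inr (Or.inr (Or.inr (Or.inr (Or.inr (Or.inl ((d_sub n 82).mp (hT8 ▸ hsub))))))))))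
    · exact Or.inr (Or.inr (Or.inr (Or.inr (Or.inr (Or.inr (Or.inr (Or.inr (Or.inr (Or.inl ((d_sub n 81).mp (hT9 ▸ hsub)))))))))))
    · exact Or.inr (Or.inr (Or.inr (Or.inr (Or.inr (Or.inr (Or.inr (Or.inr (Or.inr (Or.inr (Or.inl ((d_sub n 69).mp (hT10 ▸ hsub))))))))))))
    · exact Or.inr (Or.inr (Or.inr (Or.inr (Or.inr (Or.inr (Or.inr (Or.inr (Or.inr (Or.inr (Or.inr (Or.inl ((d_sub n 76).mp (hT11 ▸ hsub)))))))))))))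
    · exact Or.inr (Or.inr (Or.inr (Or.inr (Or.inr (Or.inr (Or.inr (Or.inr (Or.inr (Or.inr (Or.inr (Or.inr ((d_sub n 28).mp (hT12 ▸ hsub)))))))))))))
  · rintro ⟨hne, h⟩
    refine ⟨(dne n).mpr hne, ?_⟩
    rcases h with h|h|h|h|h|h|h|h|h|h|h|h|h
    · exact ⟨d 42, Or.inl hT0.symm, (d_sub n 42).mpr h⟩
    · exact ⟨d 74, Or.inr (Or.inl hT1.symm), (d_sub n 74).mpr h⟩
    · exact ⟨d 56, Or.inr (Or.inr (Or.inl hT2.symm)), (d_sub n 56).mpr h⟩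
    · exact ⟨d 49, Or.inr (Or.inr (Or.inr (Or.inl hT3.symm))), (d_sub n 49).mpr h⟩
    · exact ⟨d 37, Or.inr (Or.inr (Or.inr (Or.inr (Or.inl hT4.symm)))), (d_sub n 37).mpr h⟩
    · exact ⟨d 38, Or.inr (Or.inr (Or.inr (Or.inr (Or.inr (Or.inl hT5.symm))))), (d_sub n 38).mpr h⟩
    · exact ⟨d 7, Or.inr (Or.inr (Or.inr (Or.inr (Or.inr (Or.inr (Or.inl hT6.symm)))))), (d_sub n 7).mpr h⟩
    · exact ⟨d 19, Or.inr (Or.inr (Or.inr (Or.inr (Or.inr (Or.inr (Or.inr (Or.inl hT7.symm))))))), (d_sub n 19).mpr h⟩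
    · exact ⟨d 82, Or.inr (Or.inr (Or.inr (Or.inr (Or.inr (Or.inr (Or.inr (Or.inr (Or.inl hT8.symm)))))))), (d_sub n 82).mpr h⟩
    · exact ⟨d 81, Or.inr (Or.inr (Or.inr (Or.inr (Or.inr (Or.inr (Or.inr (Or.inr (Or.inr (Or.inl hT9.symm))))))))), (d_sub n 81).mpr h⟩
    · exact ⟨d 69, Or.inr (Or.inr (Or.inr (Or.inr (Or.inr (Or.inr (Or.inr (Or.inr (Or.inr (Or.inr (Or.inl hT10.symm)))))))))), (d_sub n 69).mpr h⟩
    · exact ⟨d 76, Or.inr (Or.inr (Or.inr (Or.inr (Or.inr (Or.inr (Or.inr (Or.inr (Or.inr (Or.inr (Or.inr (Or.inl hT11.symm))))))))))), (d_sub n 76).mpr h⟩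
    · exact ⟨d 28, Or.inr (Or.inr (Or.inr (Or.inr (Or.inr (Or.inr (Or.inr (Or.inr (Or.inr (Or.inr (Or.inr (Or.inr (hT12.symm)))))))))))), (d_sub n 28).mpr h⟩

lemma final_eq : S L19 = ({({0} : Finset (Fin 7))} : Set (Finset (Fin 7))) := by
  ext σ
  simp only [S, L19, List.mem_singleton, Set.mem_setOf_eq, Set.mem_singleton_iff]
  constructor
  · rintro ⟨n, rfl, rfl⟩
    decide
  · rintro rfl
    exact ⟨1, rfl, by decide⟩

end DunceProof

/-- the modified dunce hat is collapsible, and `ω = {s,u} = {2,4}`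
is its unique free face. -/
theorem stmt6 : Collapsible modifiedDunceHat ∧
    ∀ σ : Finset (Fin 7),
      IsFreeFace modifiedDunceHat σ ↔ σ = ({2, 4} : Finset (Fin 7)) := by
  refine ⟨⟨0, ?_⟩, ?_⟩
  · rw [mdh_eq, ← final_eq]
    exact chainD
  · intro σ
    rw [mdh_eq]
    obtain ⟨n, rfl⟩ := d_surj σ
    have key2 : ∀ n : Fin 128, freeM L0 n ↔ n = 20 := by
      set_option maxRecDepth 100000 in decide
    rw [free_iff L0 n, key2 n]
    constructor
    · rintro rfl
      decide
    · intro h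
      have h20 : ({2, 4} : Finset (Fin 7)) = d 20 := by decide
      rw [h20] at h
      exact d_inj h
end MorseApprox
end

section
/- Let G be an oriented connected degree-3 graph, H a subgraph of G, and e ∈ E_H. If D_e is erasable in K(G,H) through a discrete gradient vector field V, then (ω_e, Γ_e) is a gradient pair in V; moreover, for any discrete Morse function f on K(G,H) whose gradient is V and any simplex σ ∈ D_e with σ ∉ {ω_e, Γ_e}, one has f(ω_e) > f(σ). -/
namespace MorseApprox

variable {α : Type*}

/-- An oriented graph: a directed graph with no loops and no anti-parallel pairs. -/
def Oriented (E : Finset (α × α)) : Prop :=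
  ∀ e ∈ E, e.1 ≠ e.2 ∧ (e.2, e.1) ∉ E

def outdeg [DecidableEq α] (F : Finset (α × α)) (v : α) : ℕ :=
  (F.filter fun e => e.1 = v).card

def indeg [DecidableEq α] (F : Finset (α × α)) (v : α) : ℕ :=
  (F.filter fun e => e.2 = v).card

/-- Total degree (in-degree plus out-degree) at most 3 at every vertex. -/
def Degree3 [DecidableEq α] (E : Finset (α × α)) : Prop :=
  ∀ v : α, indeg E v + outdeg E v ≤ 3

/-- The underlying undirected graph (on the whole vertex type) is connected. -/
def GraphConnected (E : Finset (α × α)) : Prop :=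
  ∀ x y : α, Relation.ReflTransGen (fun a b : α => (a, b) ∈ E ∨ (b, a) ∈ E) x y

/-- An edge set is acyclic if it contains no directed cycle. -/
def AcyclicEdges (A : Set (α × α)) : Prop :=
  ∀ x : α, ¬ Relation.TransGen (fun a b : α => (a, b) ∈ A) x x

/-- The maximum number of edges of an acyclic subgraph of `E`. -/
noncomputable def maxAcyclic [DecidableEq α] (E : Finset (α × α)) : ℕ :=
  sSup {n | ∃ A : Finset (α × α), A ⊆ E ∧ AcyclicEdges (↑A : Set (α × α)) ∧ n = A.card}

/-- The minimum cardinality of a feedback arc set of `E`. -/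
noncomputable def optMinFAS [DecidableEq α] (E : Finset (α × α)) : ℕ :=
  sInf {n | ∃ F : Finset (α × α), F ⊆ E ∧
    AcyclicEdges (↑(E \ F) : Set (α × α)) ∧ n = F.card}

/-- The vertex identifications defining `K(G,H)` (rules (b)-(e) of the construction),
on the disjoint union of copies of the modified dunce hat indexed by the edges.
Here `E` is the edge set of `G`, `F ⊆ E` the edge set of the subgraph `H`, and
`lt` the fixed linear order on edges.  Vertex indices: `s=2, t=3, u=4, v=5, w=6`. -/
def glueRel [DecidableEq α] (E F : Finset (α × α)) (lt : α × α → α × α → Prop) :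
    (α × α) × Fin 7 → (α × α) × Fin 7 → Prop := fun x y =>
  -- (b): indeg_H(v) = 0, outdeg_H(v) > 0: identify the vertices s_e over outgoing edges
  (∃ e ∈ F, ∃ e' ∈ F, e.1 = e'.1 ∧ indeg F e.1 = 0 ∧
    x = (e, (2 : Fin 7)) ∧ y = (e', (2 : Fin 7))) ∨
  -- (c): outdeg_H(v) = 0, indeg_H(v) > 0: identify the vertices t_e over incoming edges
  (∃ e ∈ F, ∃ e' ∈ F, e.2 = e'.2 ∧ outdeg F e.2 = 0 ∧
    x = (e, (3 : Fin 7)) ∧ y = (e', (3 : Fin 7))) ∨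
  -- (d)(i): indeg_G(v) = 1, outdeg_G(v) = 2, j incoming, k ≺ l outgoing, j,k ∈ F:
  -- identify φ_j ∼ ω_k via u_k ∼ v_j and s_k ∼ t_j
  (∃ j ∈ F, ∃ k ∈ F, ∃ l ∈ E, j.2 = k.1 ∧ l.1 = k.1 ∧ k ≠ l ∧ lt k l ∧
    indeg E k.1 = 1 ∧ outdeg E k.1 = 2 ∧
    ((x = (k, (4 : Fin 7)) ∧ y = (j, (5 : Fin 7))) ∨
     (x = (k, (2 : Fin 7)) ∧ y = (j, (3 : Fin 7))))) ∨
  -- (d)(ii): j incoming, k ≺ l outgoing, j,l ∈ F: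
  -- identify ψ_j ∼ ω_l via u_l ∼ w_j and s_l ∼ t_j
  (∃ j ∈ F, ∃ l ∈ F, ∃ k ∈ E, j.2 = l.1 ∧ k.1 = l.1 ∧ k ≠ l ∧ lt k l ∧
    indeg E l.1 = 1 ∧ outdeg E l.1 = 2 ∧
    ((x = (l, (4 : Fin 7)) ∧ y = (j, (6 : Fin 7))) ∨
     (x = (l, (2 : Fin 7)) ∧ y = (j, (3 : Fin 7))))) ∨
  -- (e): indeg_G(v) ∈ {1,2}, outdeg_G(v) = 1, j outgoing, k incoming, j,k ∈ F:
  -- identify ω_j ∼ φ_k via u_j ∼ v_k and s_j ∼ t_k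
  (∃ j ∈ F, ∃ k ∈ F, k.2 = j.1 ∧
    (indeg E j.1 = 1 ∨ indeg E j.1 = 2) ∧ outdeg E j.1 = 1 ∧
    ((x = (j, (4 : Fin 7)) ∧ y = (k, (5 : Fin 7))) ∨
     (x = (j, (2 : Fin 7)) ∧ y = (k, (3 : Fin 7)))))

/-- The image in the quotient of a simplex `σ` of the copy `D_e` of the
modified dunce hat. -/
noncomputable def qmap [DecidableEq α] (E F : Finset (α × α))
    (lt : α × α → α × α → Prop) (e : α × α) (σ : Finset (Fin 7)) :
    Finset (Quot (glueRel E F lt)) :=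
  letI : DecidableEq (Quot (glueRel E F lt)) := Classical.decEq _
  σ.image fun i => Quot.mk (glueRel E F lt) (e, i)

/-- The complex `K(G,H)`. -/
def KGH [DecidableEq α] (E F : Finset (α × α)) (lt : α × α → α × α → Prop) :
    Set (Finset (Quot (glueRel E F lt))) :=
  {ρ | ∃ e ∈ F, ∃ σ ∈ modifiedDunceHat, ρ = qmap E F lt e σ}

/-- The copy `D_e` of the modified dunce hat inside `K(G,H)`. -/
def gadgetIn [DecidableEq α] (E F : Finset (α × α)) (lt : α × α → α × α → Prop)
    (e : α × α) : Set (Finset (Quot (glueRel E F lt))) :=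
  {ρ | ∃ σ ∈ modifiedDunceHat, ρ = qmap E F lt e σ}

/-- The edge `ω_e = {s_e, u_e}` inside `K(G,H)`. -/
noncomputable def omegaIn [DecidableEq α] (E F : Finset (α × α))
    (lt : α × α → α × α → Prop) (e : α × α) : Finset (Quot (glueRel E F lt)) :=
  qmap E F lt e {2, 4}

/-- The triangle `Γ_e = {s_e, t_e, u_e}` inside `K(G,H)`. -/
noncomputable def gammaIn [DecidableEq α] (E F : Finset (α × α))
    (lt : α × α → α × α → Prop) (e : α × α) : Finset (Quot (glueRel E F lt)) :=
  qmap E F lt e {2, 3, 4}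

set_option maxRecDepth 4000

section Aux
variable {α : Type*}

def FinT : Finset (Finset (Fin 7)) :=
  {{1, 3, 5}, {1, 3, 6}, {3, 4, 5}, {0, 4, 5}, {0, 2, 5}, {1, 2, 5}, {0, 1, 2},
   {0, 1, 4}, {1, 4, 6}, {0, 4, 6}, {0, 2, 6}, {2, 3, 6}, {2, 3, 4}}

lemma mem_FinT_iff {T : Finset (Fin 7)} : T ∈ dunceTriangles ↔ T ∈ FinT := by
  simp [dunceTriangles, FinT]

lemma FinT_card : ∀ T ∈ FinT, T.card = 3 := by decide

lemma FinT_nonempty : ∀ T ∈ FinT, T.Nonempty := by decide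

lemma key1 : ∀ T₀ ∈ FinT, ∀ σ₀ ∈ T₀.powerset, σ₀.card = 2 → σ₀ ≠ {2,4} →
    ∃ T₁ ∈ FinT, T₁ ≠ T₀ ∧ σ₀ ⊆ T₁ := by decide

lemma key2 : ∀ T₀ ∈ FinT, ({2,4} : Finset (Fin 7)) ⊆ T₀ → T₀ = {2,3,4} := by decide

lemma key3 : ∀ T₀ ∈ FinT, ∀ σ₀ ∈ T₀.powerset, σ₀ ≠ {2,4} → σ₀ ≠ ({2,3,4} : Finset (Fin 7)) →
    ∃ T₁ ∈ FinT, T₁ ≠ {2,3,4} ∧ σ₀ ⊆ T₁ := by decide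

end Aux

section Glue
variable {α : Type*}

open Classical in
noncomputable def gInv (E : Finset (α × α)) (lt : α × α → α × α → Prop) :
    (α × α) × Fin 7 → ((α × α) × Fin 7) ⊕ (α × Fin 4) := fun x =>
  if x.2 = 2 then .inr (x.1.1, 0)
  else if x.2 = 3 then .inr (x.1.2, 0)
  else if x.2 = 4 then .inr (x.1.1, if ∃ k ∈ E, k.1 = x.1.1 ∧ lt k x.1 then 2 else 1)
  else if x.2 = 5 then .inr (x.1.2, 1)
  else if x.2 = 6 then .inr (x.1.2, 2)
  else .inl x

open Classical in
lemma gInv_two {E : Finset (α × α)} {lt : α × α → α × α → Prop} {e : α × α} :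
    gInv E lt (e, 2) = .inr (e.1, 0) := by simp [gInv]

open Classical in
lemma gInv_three {E : Finset (α × α)} {lt : α × α → α × α → Prop} {e : α × α} :
    gInv E lt (e, 3) = .inr (e.2, 0) := by simp [gInv]

open Classical in
lemma gInv_four {E : Finset (α × α)} {lt : α × α → α × α → Prop} {e : α × α} :
    gInv E lt (e, 4) = .inr (e.1, if ∃ k ∈ E, k.1 = e.1 ∧ lt k e then 2 else 1) := by
  simp [gInv]

open Classical in
lemma gInv_five {E : Finset (α × α)} {lt : α × α → α × α → Prop} {e : α × α} :
    gInv E lt (e, 5) = .inr (e.2, 1) := by simp [gInv]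

open Classical in
lemma gInv_six {E : Finset (α × α)} {lt : α × α → α × α → Prop} {e : α × α} :
    gInv E lt (e, 6) = .inr (e.2, 2) := by simp [gInv]


open Classical in
lemma gInv_zero {E : Finset (α × α)} {lt : α × α → α × α → Prop} {e : α × α} :
    gInv E lt (e, 0) = .inl (e, 0) := by simp [gInv]

open Classical in
lemma gInv_one {E : Finset (α × α)} {lt : α × α → α × α → Prop} {e : α × α} :
    gInv E lt (e, 1) = .inl (e, 1) := by simp [gInv]

lemma out_mem_pair [DecidableEq α] {E : Finset (α × α)} {v : α}
    (h2 : outdeg E v = 2) {k l k' : α × α} (hk : k ∈ E) (hl : l ∈ E)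
    (hk1 : k.1 = v) (hl1 : l.1 = v) (hkl : k ≠ l)
    (hk' : k' ∈ E) (hk'1 : k'.1 = v) : k' = k ∨ k' = l := by
  have hsub : ({k, l} : Finset (α × α)) ⊆ E.filter (fun e => e.1 = v) := by
    intro x hx
    rcases Finset.mem_insert.1 hx with rfl | hx
    · exact Finset.mem_filter.2 ⟨hk, hk1⟩
    · rw [Finset.mem_singleton] at hx; subst hx
      exact Finset.mem_filter.2 ⟨hl, hl1⟩
  have hcard : (E.filter (fun e => e.1 = v)).card ≤ ({k, l} : Finset (α × α)).card := by
    rw [Finset.card_pair hkl]; exact le_of_eq h2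
  have heq := Finset.eq_of_subset_of_card_le hsub hcard
  have hmem : k' ∈ ({k, l} : Finset (α × α)) := by
    rw [heq]; exact Finset.mem_filter.2 ⟨hk', hk'1⟩
  simpa using hmem

lemma out_eq_single [DecidableEq α] {E : Finset (α × α)} {v : α}
    (h1 : outdeg E v = 1) {j k' : α × α} (hj : j ∈ E) (hj1 : j.1 = v)
    (hk' : k' ∈ E) (hk'1 : k'.1 = v) : k' = j := by
  have hsub : ({j} : Finset (α × α)) ⊆ E.filter (fun e => e.1 = v) := by
    intro x hx
    rw [Finset.mem_singleton] at hx; subst hx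
    exact Finset.mem_filter.2 ⟨hj, hj1⟩
  have hcard : (E.filter (fun e => e.1 = v)).card ≤ ({j} : Finset (α × α)).card := by
    rw [Finset.card_singleton]; exact le_of_eq h1
  have heq := Finset.eq_of_subset_of_card_le hsub hcard
  have hmem : k' ∈ ({j} : Finset (α × α)) := by
    rw [heq]; exact Finset.mem_filter.2 ⟨hk', hk'1⟩
  simpa using hmem

lemma gInv_rel [DecidableEq α] {E F : Finset (α × α)} {lt : α × α → α × α → Prop}
    [IsStrictTotalOrder (α × α) lt] (hF : F ⊆ E) :
    ∀ {x y}, glueRel E F lt x y → gInv E lt x = gInv E lt y := by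
  intro x y h
  rcases h with ⟨e, he, e', he', h1, h0, rfl, rfl⟩ | ⟨e, he, e', he', h1, h0, rfl, rfl⟩ |
    ⟨j, hj, k, hk, l, hl, hjk, hlk, hkl, hltkl, hi, ho, hxy⟩ |
    ⟨j, hj, l, hl, k, hk, hjl, hkl1, hkl, hltkl, hi, ho, hxy⟩ |
    ⟨j, hj, k, hk, hkj, hi, ho, hxy⟩
  · rw [gInv_two, gInv_two, h1]
  · rw [gInv_three, gInv_three, h1]
  · rcases hxy with ⟨rfl, rfl⟩ | ⟨rfl, rfl⟩
    · rw [gInv_four, gInv_five, hjk]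
      congr 1
      rw [if_neg]
      rintro ⟨k', hk'E, hk'1, hlt⟩
      rcases out_mem_pair ho (hF hk) hl rfl hlk hkl hk'E hk'1 with rfl | rfl
      · exact absurd hlt (irrefl_of lt k')
      · exact absurd (trans_of lt hlt hltkl) (irrefl_of lt k')
    · rw [gInv_two, gInv_three, hjk]
  · rcases hxy with ⟨rfl, rfl⟩ | ⟨rfl, rfl⟩
    · rw [gInv_four, gInv_six, hjl]
      congr 1
      rw [if_pos ⟨k, hk, hkl1, hltkl⟩]
    · rw [gInv_two, gInv_three, hjl]
  · rcases hxy with ⟨rfl, rfl⟩ | ⟨rfl, rfl⟩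
    · rw [gInv_four, gInv_five, hkj]
      congr 1
      rw [if_neg]
      rintro ⟨k', hk'E, hk'1, hlt⟩
      have := out_eq_single ho (hF hj) rfl hk'E hk'1
      subst this
      exact absurd hlt (irrefl_of lt k')
    · rw [gInv_two, gInv_three, hkj]

lemma mk_inj [DecidableEq α] {E F : Finset (α × α)} {lt : α × α → α × α → Prop}
    [IsStrictTotalOrder (α × α) lt] (hF : F ⊆ E) {e : α × α} (hne : e.1 ≠ e.2)
    {i j : Fin 7}
    (h : Quot.mk (glueRel E F lt) (e, i) = Quot.mk (glueRel E F lt) (e, j)) :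
    i = j := by
  have hg : gInv E lt (e, i) = gInv E lt (e, j) :=
    congrArg (Quot.lift (gInv E lt) (fun a b hab => gInv_rel hF hab)) h
  fin_cases i <;> fin_cases j <;>
    simp only [show (⟨0, by omega⟩ : Fin 7) = 0 from rfl, show (⟨1, by omega⟩ : Fin 7) = 1 from rfl,
      show (⟨2, by omega⟩ : Fin 7) = 2 from rfl, show (⟨3, by omega⟩ : Fin 7) = 3 from rfl,
      show (⟨4, by omega⟩ : Fin 7) = 4 from rfl, show (⟨5, by omega⟩ : Fin 7) = 5 from rfl,
      show (⟨6, by omega⟩ : Fin 7) = 6 from rfl,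
      gInv_zero, gInv_one, gInv_two, gInv_three, gInv_four, gInv_five, gInv_six,
      Sum.inl.injEq, Sum.inr.injEq, Prod.mk.injEq] at hg <;>
    first
      | rfl
      | exact (Sum.inl_ne_inr hg).elim
      | exact (Sum.inr_ne_inl hg).elim
      | exact absurd hg.1 hne
      | exact absurd hg.1.symm hne
      | exact absurd hg.2 (by decide)
      | (exfalso; have h2 := hg.2; split_ifs at h2 <;> exact absurd h2 (by decide))

end Glue

section QmapLemmas
variable {α : Type*} [DecidableEq α] {E F : Finset (α × α)} {lt : α × α → α × α → Prop}

lemma mem_qmap {e : α × α} {σ : Finset (Fin 7)} {a : Quot (glueRel E F lt)} :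
    a ∈ qmap E F lt e σ ↔ ∃ i ∈ σ, Quot.mk (glueRel E F lt) (e, i) = a := by
  letI : DecidableEq (Quot (glueRel E F lt)) := Classical.decEq _
  unfold qmap
  exact Finset.mem_image

lemma qmap_mono {e : α × α} {σ τ : Finset (Fin 7)} (h : σ ⊆ τ) :
    qmap E F lt e σ ⊆ qmap E F lt e τ := by
  intro a ha
  rw [mem_qmap] at ha ⊢
  obtain ⟨i, hi, rfl⟩ := ha
  exact ⟨i, h hi, rfl⟩

lemma qmap_card {e : α × α}
    (hinj : ∀ i j : Fin 7, Quot.mk (glueRel E F lt) (e, i) = Quot.mk (glueRel E F lt) (e, j) → i = j)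
    (σ : Finset (Fin 7)) : (qmap E F lt e σ).card = σ.card := by
  letI : DecidableEq (Quot (glueRel E F lt)) := Classical.decEq _
  unfold qmap
  exact Finset.card_image_of_injOn (fun i _ j _ h => hinj i j h)

lemma qmap_subset_rev {e : α × α}
    (hinj : ∀ i j : Fin 7, Quot.mk (glueRel E F lt) (e, i) = Quot.mk (glueRel E F lt) (e, j) → i = j)
    {σ τ : Finset (Fin 7)} (h : qmap E F lt e σ ⊆ qmap E F lt e τ) : σ ⊆ τ := by
  intro i hi
  have hmem : Quot.mk (glueRel E F lt) (e, i) ∈ qmap E F lt e τ :=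
    h (mem_qmap.2 ⟨i, hi, rfl⟩)
  obtain ⟨j, hj, hj2⟩ := mem_qmap.1 hmem
  rwa [← hinj j i hj2]

lemma qmap_injEq {e : α × α}
    (hinj : ∀ i j : Fin 7, Quot.mk (glueRel E F lt) (e, i) = Quot.mk (glueRel E F lt) (e, j) → i = j)
    {σ τ : Finset (Fin 7)} (h : qmap E F lt e σ = qmap E F lt e τ) : σ = τ :=
  Finset.Subset.antisymm (qmap_subset_rev hinj (le_of_eq h))
    (qmap_subset_rev hinj (le_of_eq h.symm))

lemma exists_of_subset_qmap {e : α × α} {τ : Finset (Fin 7)}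
    {ρ : Finset (Quot (glueRel E F lt))} (h : ρ ⊆ qmap E F lt e τ) :
    ∃ σ, σ ⊆ τ ∧ ρ = qmap E F lt e σ := by
  classical
  refine ⟨τ.filter (fun i => Quot.mk (glueRel E F lt) (e, i) ∈ ρ),
    Finset.filter_subset _ _, ?_⟩
  ext a
  rw [mem_qmap]
  constructor
  · intro ha
    obtain ⟨i, hi, rfl⟩ := mem_qmap.1 (h ha)
    exact ⟨i, Finset.mem_filter.2 ⟨hi, ha⟩, rfl⟩
  · rintro ⟨i, hif, rfl⟩
    exact (Finset.mem_filter.1 hif).2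

lemma card_le_three_of_mem {ρ : Finset (Quot (glueRel E F lt))}
    (h : ρ ∈ KGH E F lt) : ρ.card ≤ 3 := by
  obtain ⟨e', _, σ, hσ, rfl⟩ := h
  obtain ⟨-, T, hT, hsub⟩ := hσ
  have h1 : (qmap E F lt e' σ).card ≤ σ.card := by
    letI : DecidableEq (Quot (glueRel E F lt)) := Classical.decEq _
    unfold qmap; exact Finset.card_image_le
  have h2 : σ.card ≤ T.card := Finset.card_le_card hsub
  have h3 : T.card = 3 := FinT_card T (mem_FinT_iff.1 hT)
  omega

end QmapLemmas

lemma no_regress {β : Type*} {S : Set β} (hfin : S.Finite) {R : β → β → Prop}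
    (hR : ∀ b, ¬ Relation.TransGen R b b)
    (hstep : ∀ b ∈ S, ∃ b' ∈ S, Relation.TransGen R b' b) :
    S = ∅ := by
  by_contra hne
  obtain ⟨b₀, hb₀⟩ := Set.nonempty_iff_ne_empty.2 hne
  choose nxt hmem htg using hstep
  have : Finite S := hfin.to_subtype
  let fstep : {b // b ∈ S} → {b // b ∈ S} := fun b => ⟨nxt b.1 b.2, hmem b.1 b.2⟩
  let seq : ℕ → {b // b ∈ S} := fun n => fstep^[n] ⟨b₀, hb₀⟩
  have hseq : ∀ n, Relation.TransGen R (seq (n + 1)).1 (seq n).1 := by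
    intro n
    have h1 : seq (n + 1) = fstep (seq n) := Function.iterate_succ_apply' fstep n _
    rw [h1]
    exact htg (seq n).1 (seq n).2
  have hmono : ∀ m n : ℕ, m < n → Relation.TransGen R (seq n).1 (seq m).1 := by
    intro m n h
    induction n with
    | zero => omega
    | succ k ih =>
      rcases Nat.lt_succ_iff_lt_or_eq.1 h with h' | h'
      · exact (hseq k).trans (ih h')
      · subst h'; exact hseq m
  obtain ⟨x, y, hxy, hxyeq⟩ := Finite.exists_ne_map_eq_of_infinite seq
  rcases hxy.lt_or_gt with h | h
  · refine hR (seq y).1 ?_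
    have h2 := hmono x y h
    rw [hxyeq] at h2
    exact h2
  · refine hR (seq y).1 ?_
    have h2 := hmono y x h
    rw [hxyeq] at h2
    exact h2

/-- if `D_e` is erasable in `K(G,H)` through a gradient `V`, then
`(ω_e, Γ_e) ∈ V`, and any discrete Morse function with gradient `V` satisfies
`f(ω_e) > f(σ)` for every `σ ∈ D_e` other than `ω_e, Γ_e`. -/
theorem stmt8 {α : Type*} [DecidableEq α] (E F : Finset (α × α))
    (lt : α × α → α × α → Prop) [IsStrictTotalOrder (α × α) lt]
    (hor : Oriented E) (hconn : GraphConnected E) (hdeg : Degree3 E)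
    (hF : F ⊆ E) (e : α × α) (he : e ∈ F)
    (V : Set (Finset (Quot (glueRel E F lt)) × Finset (Quot (glueRel E F lt))))
    (hV : IsDGVF (KGH E F lt) V)
    (her : ErasableThrough (KGH E F lt) (gadgetIn E F lt e) V) :
    (omegaIn E F lt e, gammaIn E F lt e) ∈ V ∧
    ∀ f : Finset (Quot (glueRel E F lt)) → ℝ, IsDiscreteMorse (KGH E F lt) f →
      V = {p | p.1 ∈ KGH E F lt ∧ p.2 ∈ KGH E F lt ∧ IsFacet p.1 p.2 ∧
        f p.1 = f p.2} →
      ∀ σ ∈ gadgetIn E F lt e, σ ≠ omegaIn E F lt e → σ ≠ gammaIn E F lt e →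
        f σ < f (omegaIn E F lt e) := by
  classical
  obtain ⟨M, ⟨hMsub, hcover⟩, hcoll, hdiff, h2s⟩ := her
  have heE : e ∈ E := hF he
  have hne : e.1 ≠ e.2 := (hor e heE).1
  have hinj : ∀ i j : Fin 7, Quot.mk (glueRel E F lt) (e, i) =
      Quot.mk (glueRel E F lt) (e, j) → i = j :=
    fun i j h => mk_inj hF hne h
  set Tset : Set (Finset (Quot (glueRel E F lt))) :=
    {ρ | ∃ T₀ ∈ dunceTriangles, ρ = qmap E F lt e T₀} with hTsetdef
  have hTfin : Tset.Finite := by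
    have hsub : Tset ⊆ (fun T₀ => qmap E F lt e T₀) '' dunceTriangles := by
      rintro ρ ⟨T₀, hT₀, rfl⟩
      exact ⟨T₀, hT₀, rfl⟩
    exact (((Set.toFinite dunceTriangles).image _).subset hsub)
  have hTcard : ∀ ρ ∈ Tset, ρ.card = 3 := by
    rintro ρ ⟨T₀, hT₀, rfl⟩
    rw [qmap_card hinj]
    exact FinT_card T₀ (mem_FinT_iff.1 hT₀)
  have hTK : ∀ ρ ∈ Tset, ρ ∈ KGH E F lt := by
    rintro ρ ⟨T₀, hT₀, rfl⟩
    exact ⟨e, he, T₀, ⟨FinT_nonempty T₀ (mem_FinT_iff.1 hT₀), T₀, hT₀, Finset.Subset.refl T₀⟩, rfl⟩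
  have hTgad : ∀ ρ ∈ Tset, ρ ∈ gadgetIn E F lt e := by
    rintro ρ ⟨T₀, hT₀, rfl⟩
    exact ⟨T₀, ⟨FinT_nonempty T₀ (mem_FinT_iff.1 hT₀), T₀, hT₀, Finset.Subset.refl T₀⟩, rfl⟩
  have hTKM : ∀ ρ ∈ Tset, ρ ∈ KGH E F lt \ M := by
    intro ρ hρ
    have h2 : ρ ∈ twoSimplices (gadgetIn E F lt e) := ⟨hTgad ρ hρ, hTcard ρ hρ⟩
    rw [← h2s] at h2
    exact ⟨h2.1.1, h2.2⟩
  have hmatch : ∀ ρ ∈ Tset, ∃ σ, (σ, ρ) ∈ V ∧ σ ∈ KGH E F lt ∧ σ ⊆ ρ ∧ σ.card = 2 := by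
    intro ρ hρ
    obtain ⟨p, hpV, hpor, hp1, hp2⟩ := hcover ρ (hTKM ρ hρ)
    obtain ⟨p1, p2⟩ := p
    obtain ⟨hK1, hK2, hfsub, hfcard⟩ := hV.1 _ hpV
    have hρ3 := hTcard ρ hρ
    simp only at hpor hp1 hp2 hK1 hK2 hfsub hfcard
    rcases hpor with h | h
    · exfalso
      have h4 := card_le_three_of_mem hK2
      subst h
      omega
    · subst h
      exact ⟨p1, hpV, hK1, hfsub, by omega⟩
  have hstep_core : ∀ ρ ∈ Tset, ∀ σ', (σ', ρ) ∈ V → σ' ∈ KGH E F lt → σ' ⊆ ρ →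
      σ'.card = 2 → σ' ≠ omegaIn E F lt e →
      ∃ ρ' ∈ Tset, ρ' ≠ ρ ∧ σ' ⊆ ρ' ∧
        Relation.TransGen (VStep (KGH E F lt) V) ρ' ρ := by
    rintro ρ hρ σ' hσV hσK hσρ hσ2 hσω
    obtain ⟨T₀, hT₀, rfl⟩ := hρ
    obtain ⟨σ₀, hσ₀T, rfl⟩ := exists_of_subset_qmap hσρ
    have hσ₀2 : σ₀.card = 2 := by rw [← qmap_card hinj σ₀]; exact hσ2
    have hσ₀ω : σ₀ ≠ {2, 4} := by
      intro h
      exact hσω (by rw [h]; rfl)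
    obtain ⟨T₁, hT₁F, hT₁ne, hσT₁⟩ :=
      key1 T₀ (mem_FinT_iff.1 hT₀) σ₀ (Finset.mem_powerset.2 hσ₀T) hσ₀2 hσ₀ω
    have hρ'T : qmap E F lt e T₁ ∈ Tset := ⟨T₁, mem_FinT_iff.2 hT₁F, rfl⟩
    have hρ'ne : qmap E F lt e T₁ ≠ qmap E F lt e T₀ := by
      intro h
      exact hT₁ne (qmap_injEq hinj h)
    have hnotV : (qmap E F lt e σ₀, qmap E F lt e T₁) ∉ V := by
      intro hbad
      have := hV.2.1 _ hσV _ hbad (Or.inl rfl)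
      exact hρ'ne.symm (congrArg Prod.snd this)
    have hfacet : IsFacet (qmap E F lt e σ₀) (qmap E F lt e T₁) := by
      refine ⟨qmap_mono hσT₁, ?_⟩
      rw [qmap_card hinj, FinT_card T₁ hT₁F, hσ2]
    refine ⟨qmap E F lt e T₁, hρ'T, hρ'ne, qmap_mono hσT₁, ?_⟩
    exact Relation.TransGen.head
      (Or.inl ⟨hTK _ hρ'T, hσK, hfacet, hnotV⟩)
      (Relation.TransGen.single (Or.inr hσV))
  have hA : (omegaIn E F lt e, gammaIn E F lt e) ∈ V := by
    by_contra hnot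
    have hΓT : gammaIn E F lt e ∈ Tset :=
      ⟨{2, 3, 4}, mem_FinT_iff.2 (by decide), rfl⟩
    have hempty : Tset = ∅ := by
      refine no_regress hTfin hV.2.2 ?_
      intro ρ hρ
      obtain ⟨σ', hσV, hσK, hσρ, hσ2⟩ := hmatch ρ hρ
      have hσω : σ' ≠ omegaIn E F lt e := by
        rintro rfl
        obtain ⟨T₀, hT₀, rfl⟩ := hρ
        have hsub : ({2, 4} : Finset (Fin 7)) ⊆ T₀ := qmap_subset_rev hinj hσρ
        have h24 := key2 T₀ (mem_FinT_iff.1 hT₀) hsub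
        subst h24
        exact hnot hσV
      obtain ⟨ρ', hρ'T, _, _, htg⟩ := hstep_core ρ hρ σ' hσV hσK hσρ hσ2 hσω
      exact ⟨ρ', hρ'T, htg⟩
    rw [hempty] at hΓT
    exact hΓT
  refine ⟨hA, ?_⟩
  intro f hf hVf σ hσgad hσω hσΓ
  have hfωΓ : f (omegaIn E F lt e) = f (gammaIn E F lt e) := by
    have h := hA
    rw [hVf] at h
    exact h.2.2.2
  have hSempty : {ρ | ρ ∈ Tset ∧ ρ ≠ gammaIn E F lt e ∧
      ¬ f ρ < f (gammaIn E F lt e)} = ∅ := by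
    refine no_regress (hTfin.subset (fun ρ hρ => hρ.1)) hV.2.2 ?_
    rintro ρ ⟨hρT, hρΓ, hρf⟩
    obtain ⟨σ', hσ'V, hσ'K, hσ'ρ, hσ'2⟩ := hmatch ρ hρT
    have hσ'ω : σ' ≠ omegaIn E F lt e := by
      rintro rfl
      have h := hV.2.1 _ hσ'V _ hA (Or.inl rfl)
      exact hρΓ (congrArg Prod.snd h)
    obtain ⟨ρ', hρ'T, hρ'ne, hσρ', htg⟩ :=
      hstep_core ρ hρT σ' hσ'V hσ'K hσ'ρ hσ'2 hσ'ω
    have hfσρ : f σ' = f ρ := by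
      rw [hVf] at hσ'V
      exact hσ'V.2.2.2
    have hlt : f σ' < f ρ' := by
      have hle : f σ' ≤ f ρ' := hf.1 σ' hσ'K _ (hTK ρ' hρ'T) hσρ'
      rcases lt_or_eq_of_le hle with h | h
      · exact h
      · exfalso
        have hfacet : IsFacet σ' ρ' := ⟨hσρ', by rw [hTcard ρ' hρ'T, hσ'2]⟩
        have hmemV : (σ', ρ') ∈ V := by
          rw [hVf]
          exact ⟨hσ'K, hTK ρ' hρ'T, hfacet, h⟩
        have heq := hV.2.1 _ hσ'V _ hmemV (Or.inl rfl)
        exact hρ'ne (congrArg Prod.snd heq).symm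
    have hρlt : f ρ < f ρ' := by rw [← hfσρ]; exact hlt
    refine ⟨ρ', ⟨hρ'T, ?_, ?_⟩, htg⟩
    · intro hEq
      rw [hEq] at hρlt
      exact hρf hρlt
    · intro hbad
      exact hρf (lt_trans hρlt hbad)
  have hTlt : ∀ ρ ∈ Tset, ρ ≠ gammaIn E F lt e → f ρ < f (gammaIn E F lt e) := by
    intro ρ h1 h2
    by_contra h3
    have hmem : ρ ∈ {ρ | ρ ∈ Tset ∧ ρ ≠ gammaIn E F lt e ∧
        ¬ f ρ < f (gammaIn E F lt e)} := ⟨h1, h2, h3⟩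
    rw [hSempty] at hmem
    exact hmem
  obtain ⟨σ₀, hσ₀mDH, rfl⟩ := hσgad
  obtain ⟨hσ₀ne, T₀, hT₀, hσ₀T⟩ := hσ₀mDH
  have h1 : σ₀ ≠ {2, 4} := by
    intro h
    exact hσω (by rw [h]; rfl)
  have h2 : σ₀ ≠ {2, 3, 4} := by
    intro h
    exact hσΓ (by rw [h]; rfl)
  obtain ⟨T₁, hT₁F, hT₁Γ, hσT₁⟩ :=
    key3 T₀ (mem_FinT_iff.1 hT₀) σ₀ (Finset.mem_powerset.2 hσ₀T) h1 h2
  have hρ'T : qmap E F lt e T₁ ∈ Tset := ⟨T₁, mem_FinT_iff.2 hT₁F, rfl⟩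
  have hρ'Γ : qmap E F lt e T₁ ≠ gammaIn E F lt e := by
    intro h
    exact hT₁Γ (qmap_injEq hinj h)
  have hσK : qmap E F lt e σ₀ ∈ KGH E F lt := ⟨e, he, σ₀, ⟨hσ₀ne, T₀, hT₀, hσ₀T⟩, rfl⟩
  calc f (qmap E F lt e σ₀) ≤ f (qmap E F lt e T₁) :=
        hf.1 _ hσK _ (hTK _ hρ'T) (qmap_mono hσT₁)
    _ < f (gammaIn E F lt e) := hTlt _ hρ'T hρ'Γ
    _ = f (omegaIn E F lt e) := hfωΓ.symm


end MorseApprox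
end
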